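/- arXiv:2603.20840 — 6 statements merged into one kernel-verified Lean document; each statement's English description precedes it below -/
import Mathlib

section
/- There exists a constant C > 0, depending only on α, d and A, such that for every positive integer n, every pair of reals 0 ≤ v < s ≤ 1, all indices i, j ∈ {1,…,d}, and every y ∈ (0, ⌊nv⌋), one has |𝒦(y+ns−⌊nv⌋) ℰ^i_j((y+ns−⌊nv⌋)/n) − 𝒦(⌈y⌉+⌊ns⌋−⌊nv⌋) ℰ^i_j((⌈y⌉+⌊ns⌋−⌊nv⌋)/n)| · |𝒦(y+nv−⌊nv⌋) ℰ^i_j((y+nv−⌊nv⌋)/n) − 𝒦(⌈y⌉) ℰ^i_j(⌈y⌉/n)| ≤ C Ψ(y). -/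
open MeasureTheory Filter

/-- Matrix Mittag--Leffler function `E_{a,b}(M) = ∑ M^k / Γ(a k + b)`. -/
noncomputable def mittagLeffler {d : ℕ} (a b : ℝ) (M : Matrix (Fin d) (Fin d) ℝ) :
    Matrix (Fin d) (Fin d) ℝ :=
  ∑' k : ℕ, (Real.Gamma (a * k + b))⁻¹ • M ^ k

/-- `A` is negative definite: `xᵀ A x < 0` for all nonzero `x`. -/
def IsNegDef {d : ℕ} (A : Matrix (Fin d) (Fin d) ℝ) : Prop :=
  ∀ x : Fin d → ℝ, x ≠ 0 → dotProduct x (A.mulVec x) < 0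

/-- `𝒦(u) = u^(α-1)` for `u > 0` (and `0` otherwise). -/
noncomputable def calK (α u : ℝ) : ℝ := if 0 < u then u ^ (α - 1) else 0

/-- `ℰ(u) = E_{α,α}(A u^α)`. -/
noncomputable def calE {d : ℕ} (α : ℝ) (A : Matrix (Fin d) (Fin d) ℝ) (u : ℝ) :
    Matrix (Fin d) (Fin d) ℝ :=
  mittagLeffler α α ((u ^ α) • A)

/-- `E_α(A t^α)` where `E_α = E_{α,1}`. -/
noncomputable def mlOne {d : ℕ} (α : ℝ) (A : Matrix (Fin d) (Fin d) ℝ) (t : ℝ) :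
    Matrix (Fin d) (Fin d) ℝ :=
  mittagLeffler α 1 ((t ^ α) • A)

/-- The kernel `K(u) = 𝒦(u) ℰ(u) = u^(α-1) E_{α,α}(A u^α)`. -/
noncomputable def kerK {d : ℕ} (α : ℝ) (A : Matrix (Fin d) (Fin d) ℝ) (u : ℝ) :
    Matrix (Fin d) (Fin d) ℝ :=
  calK α u • calE α A u

/-- Left grid point `s̲ = ⌊n s⌋ / n` (step size `1/n`, `T = 1`). -/
noncomputable def lgrid (n : ℕ) (s : ℝ) : ℝ := (⌊(n : ℝ) * s⌋ : ℝ) / n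

/-- Left grid point `s̲ = ⌊s/h⌋ h` with `h = T/n`. -/
noncomputable def grid (T : ℝ) (n : ℕ) (s : ℝ) : ℝ := (⌊s / (T / n)⌋ : ℝ) * (T / n)

/-- Dominating function `Ψ`. -/
noncomputable def Psi (α y : ℝ) : ℝ := if y ≤ 1 then y ^ (2 * α - 2) else y ^ (2 * α - 4)

/-- `(𝒥_n)^{i₁,i₂}_{j₁,j₂}(s,y)`. -/
noncomputable def Jn {d : ℕ} (α : ℝ) (A : Matrix (Fin d) (Fin d) ℝ) (n : ℕ)
    (i1 j1 i2 j2 : Fin d) (s y : ℝ) : ℝ :=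
  (calK α (y + (n : ℝ) * s - (⌊(n : ℝ) * s⌋ : ℝ)) *
        calE α A ((y + (n : ℝ) * s - (⌊(n : ℝ) * s⌋ : ℝ)) / n) i1 j1
      - calK α ((⌈y⌉ : ℝ)) * calE α A ((⌈y⌉ : ℝ) / n) i1 j1) *
  (calK α (y + (n : ℝ) * s - (⌊(n : ℝ) * s⌋ : ℝ)) *
        calE α A ((y + (n : ℝ) * s - (⌊(n : ℝ) * s⌋ : ℝ)) / n) i2 j2
      - calK α ((⌈y⌉ : ℝ)) * calE α A ((⌈y⌉ : ℝ) / n) i2 j2)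

/-- `(𝒢_n)^{i₁,i₂}_{j₁,j₂}(s,y)`. -/
noncomputable def Gn {d : ℕ} (α : ℝ) (n : ℕ) (i1 j1 i2 j2 : Fin d) (s y : ℝ) : ℝ :=
  if i1 = j1 ∧ i2 = j2 then
    ((Real.Gamma α) ^ 2)⁻¹ *
      (calK α (y + (n : ℝ) * s - (⌊(n : ℝ) * s⌋ : ℝ)) - calK α ((⌈y⌉ : ℝ))) ^ 2
  else 0

/-- The constant `κ₂²(α)`. -/
noncomputable def kappa2sq (α : ℝ) : ℝ :=
  ((Real.Gamma α) ^ 2)⁻¹ *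
    ∫ x in Set.Ioc (0 : ℝ) 1, ∫ y in Set.Ioi (0 : ℝ),
      (calK α ((⌈y⌉ : ℝ) - x) - calK α ((⌈y⌉ : ℝ))) ^ 2

/-- Frobenius norm of a matrix. -/
noncomputable def frobNorm {d : ℕ} (M : Matrix (Fin d) (Fin d) ℝ) : ℝ :=
  Real.sqrt (∑ i, ∑ j, (M i j) ^ 2)

/-- Euclidean norm on `ℝ^d`. -/
noncomputable def euclNorm {d : ℕ} (x : Fin d → ℝ) : ℝ :=
  Real.sqrt (∑ i, (x i) ^ 2)

set_option linter.unusedSectionVars false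
set_option linter.unreachableTactic false
set_option linter.unusedTactic false
set_option maxHeartbeats 800000


/-- Sum over range (2*N) of g(k/2) equals twice the sum. -/
lemma sum_half (g : ℕ → ℝ) (N : ℕ) :
    ∑ k ∈ Finset.range (2 * N), g (k / 2) = 2 * ∑ m ∈ Finset.range N, g m := by
  induction N with
  | zero => simp
  | succ N ih =>
    have h2 : 2 * (N + 1) = (2 * N) + 1 + 1 := by ring
    rw [h2, Finset.sum_range_succ, Finset.sum_range_succ, ih, Finset.sum_range_succ]
    have e1 : (2 * N) / 2 = N := by omega
    have e2 : (2 * N + 1) / 2 = N := by omega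
    rw [e1, e2]; ring

lemma summable_halfidx (g : ℕ → ℝ) (hg0 : ∀ m, 0 ≤ g m) (hg : Summable g) :
    Summable (fun k => g (k / 2)) := by
  apply summable_of_sum_range_le (c := 2 * ∑' m, g m) (fun k => hg0 _)
  intro N
  calc ∑ k ∈ Finset.range N, g (k / 2) ≤ ∑ k ∈ Finset.range (2 * N), g (k / 2) := by
        apply Finset.sum_le_sum_of_subset_of_nonneg
        · exact Finset.range_subset_range.2 (by omega)
        · intro k _ _; exact hg0 _
    _ = 2 * ∑ m ∈ Finset.range N, g m := sum_half g N
    _ ≤ 2 * ∑' m, g m := by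
        have := hg.sum_le_tsum (Finset.range N) (fun m _ => hg0 m)
        linarith

lemma summable_ml {α : ℝ} (hα1 : 1 / 2 < α) (hα2 : α < 1) (r : ℝ) (hr : 0 ≤ r) :
    Summable (fun k : ℕ => (Real.Gamma (α * k + α))⁻¹ * r ^ k) := by
  have hα0 : 0 < α := by linarith
  set s : ℝ := (1 + r) ^ 2 with hs
  have hs0 : 0 ≤ s := by positivity
  have hgsum : Summable (fun m : ℕ => s ^ m / (Nat.factorial m : ℝ)) :=
    Real.summable_pow_div_factorial s
  have hg0 : ∀ m : ℕ, 0 ≤ s ^ m / (Nat.factorial m : ℝ) := fun m => by positivity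
  have hhalf : Summable (fun k : ℕ => s ^ (k / 2) / (Nat.factorial (k / 2) : ℝ)) :=
    summable_halfidx _ hg0 hgsum
  -- shift to k ≥ 5
  rw [← summable_nat_add_iff 5]
  have hcomp : Summable (fun k : ℕ =>
      (1 + r) ^ 2 * (s ^ ((k + 5 - 1) / 2) / (Nat.factorial ((k + 5 - 1) / 2) : ℝ))) := by
    have : Summable (fun k : ℕ => s ^ ((k + 4) / 2) / (Nat.factorial ((k + 4) / 2) : ℝ)) :=
      (summable_nat_add_iff (f := fun k : ℕ => s ^ (k / 2) / (Nat.factorial (k / 2) : ℝ)) 4).2 hhalf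
    have h' := this.mul_left ((1 + r) ^ 2)
    simpa using h'
  apply Summable.of_nonneg_of_le _ _ hcomp
  · intro k
    have : 0 < Real.Gamma (α * (k + 5 : ℕ) + α) :=
      Real.Gamma_pos_of_pos (by positivity)
    positivity
  · intro k
    set K := k + 5 with hK
    have hK5 : 5 ≤ K := by omega
    set p := (K - 1) / 2 with hp
    have hp2 : 2 ≤ p := by omega
    have hKp : K ≤ 2 * p + 2 := by omega
    -- Gamma lower bound
    have hcast : ((p + 1 : ℕ) : ℝ) ≤ α * K + α := by
      have h1 : ((p + 1 : ℕ) : ℝ) ≤ ((K + 1 : ℕ) : ℝ) / 2 := by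
        have : 2 * (p + 1) ≤ K + 1 := by omega
        have := (Nat.cast_le (α := ℝ)).2 this
        push_cast at this ⊢; linarith
      have h2 : ((K + 1 : ℕ) : ℝ) / 2 ≤ α * K + α := by
        push_cast
        nlinarith [Nat.cast_nonneg (α := ℝ) K]
      linarith
    have hGam : ((Nat.factorial p : ℝ)) ≤ Real.Gamma (α * K + α) := by
      have h1 : Real.Gamma ((p + 1 : ℕ) : ℝ) ≤ Real.Gamma (α * K + α) := by
        rcases eq_or_lt_of_le hcast with h | h
        · rw [h]
        · exact le_of_lt (Real.Gamma_strictMonoOn_Ici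
            (by simp [Set.mem_Ici]; exact_mod_cast by omega : ((p+1:ℕ):ℝ) ∈ Set.Ici 2)
            (Set.mem_Ici.2 (le_trans (by exact_mod_cast by omega) hcast)) h)
      have h2 : Real.Gamma ((p + 1 : ℕ) : ℝ) = (Nat.factorial p : ℝ) := by
        push_cast
        exact Real.Gamma_nat_eq_factorial p
      linarith
    have hGpos : 0 < Real.Gamma (α * K + α) := Real.Gamma_pos_of_pos (by positivity)
    have hfac : (0:ℝ) < (Nat.factorial p : ℝ) := by exact_mod_cast Nat.factorial_pos p
    have hginv : (Real.Gamma (α * K + α))⁻¹ ≤ ((Nat.factorial p : ℝ))⁻¹ :=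
      inv_anti₀ hfac hGam
    have hrk : r ^ K ≤ (1 + r) ^ 2 * s ^ p := by
      calc r ^ K ≤ (1 + r) ^ K := pow_le_pow_left₀ hr (by linarith) K
        _ ≤ (1 + r) ^ (2 * p + 2) := pow_le_pow_right₀ (by linarith) hKp
        _ = (1 + r) ^ 2 * s ^ p := by rw [hs, ← pow_mul]; ring
    calc (Real.Gamma (α * K + α))⁻¹ * r ^ K
        ≤ ((Nat.factorial p : ℝ))⁻¹ * ((1 + r) ^ 2 * s ^ p) := by
          apply mul_le_mul hginv hrk (by positivity) (by positivity)
      _ = (1 + r) ^ 2 * (s ^ p / (Nat.factorial p : ℝ)) := by ring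

noncomputable def matB {d : ℕ} (A : Matrix (Fin d) (Fin d) ℝ) : ℝ :=
  (∑ i, ∑ j, |A i j|) + 1

lemma one_le_matB {d : ℕ} (A : Matrix (Fin d) (Fin d) ℝ) : 1 ≤ matB A := by
  have : 0 ≤ ∑ i, ∑ j, |A i j| :=
    Finset.sum_nonneg fun i _ => Finset.sum_nonneg fun j _ => abs_nonneg _
  simp [matB]; linarith

lemma entry_pow_le {d : ℕ} (A : Matrix (Fin d) (Fin d) ℝ) (k : ℕ) (i j : Fin d) :
    |(A ^ k) i j| ≤ matB A ^ k := by
  induction k generalizing i j with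
  | zero =>
    simp [Matrix.one_apply]
    split <;> simp
  | succ k ih =>
    have h1 : (A ^ (k+1)) i j = ∑ l, (A ^ k) i l * A l j := by
      rw [pow_succ, Matrix.mul_apply]
    rw [h1]
    have hB0 : 0 ≤ matB A := le_trans zero_le_one (one_le_matB A)
    calc |∑ l, (A ^ k) i l * A l j| ≤ ∑ l, |(A ^ k) i l * A l j| :=
          Finset.abs_sum_le_sum_abs _ _
      _ ≤ ∑ l, matB A ^ k * |A l j| := by
          apply Finset.sum_le_sum
          intro l _
          rw [abs_mul]
          exact mul_le_mul_of_nonneg_right (ih i l) (abs_nonneg _)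
      _ = matB A ^ k * ∑ l, |A l j| := by rw [Finset.mul_sum]
      _ ≤ matB A ^ k * matB A := by
          apply mul_le_mul_of_nonneg_left _ (pow_nonneg hB0 k)
          have h2 : ∑ l, |A l j| ≤ ∑ l, ∑ j', |A l j'| := by
            apply Finset.sum_le_sum
            intro l _
            exact Finset.single_le_sum (f := fun j' => |A l j'|) (fun j' _ => abs_nonneg _) (Finset.mem_univ j)
          have := one_le_matB A
          simp only [matB] at *
          linarith
      _ = matB A ^ (k+1) := by rw [pow_succ]

section
variable {α : ℝ} (hα1 : 1 / 2 < α) (hα2 : α < 1) {d : ℕ} (A : Matrix (Fin d) (Fin d) ℝ)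
include hα1 hα2

omit hα2 in
lemma gamma_ml_pos (k : ℕ) : 0 < Real.Gamma (α * k + α) := by
  have hα0 : 0 < α := by linarith
  have : (0:ℝ) ≤ k := Nat.cast_nonneg k
  exact Real.Gamma_pos_of_pos (by positivity)

lemma summable_entry (t : ℝ) (ht : 0 ≤ t) (i j : Fin d) :
    Summable (fun k : ℕ => (Real.Gamma (α * k + α))⁻¹ * ((t ^ α) ^ k * (A ^ k) i j)) := by
  apply Summable.of_abs
  refine Summable.of_nonneg_of_le
    (f := fun k : ℕ => (Real.Gamma (α * k + α))⁻¹ * (t ^ α * matB A) ^ k)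
    (fun k => abs_nonneg _) (fun k => ?_) ?_
  · 
    have hG := gamma_ml_pos (α := α) hα1 k
    have htα : 0 ≤ t ^ α := Real.rpow_nonneg ht α
    rw [abs_mul, abs_of_pos (inv_pos.2 hG), abs_mul, abs_pow, abs_of_nonneg htα]
    simp only [mul_pow]
    apply mul_le_mul_of_nonneg_left _ (le_of_lt (inv_pos.2 hG))
    exact mul_le_mul_of_nonneg_left (entry_pow_le A k i j) (pow_nonneg htα k)
  · have h1 : 0 ≤ t ^ α := Real.rpow_nonneg ht α
    have h2 : (0:ℝ) ≤ matB A := le_trans zero_le_one (one_le_matB A)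
    exact summable_ml hα1 hα2 _ (mul_nonneg h1 h2)

lemma summable_matrix (t : ℝ) (ht : 0 ≤ t) :
    Summable (fun k : ℕ => (Real.Gamma (α * k + α))⁻¹ • ((t ^ α) • A) ^ k) := by
  refine Pi.summable.mpr ?_
  intro i
  rw [Pi.summable]
  intro j
  have h := summable_entry hα1 hα2 A t ht i j
  convert h using 2 with k
  simp [smul_pow, Matrix.smul_apply, smul_eq_mul, mul_assoc]

lemma calE_entry (t : ℝ) (ht : 0 ≤ t) (i j : Fin d) :
    calE α A t i j = ∑' k : ℕ, (Real.Gamma (α * k + α))⁻¹ * ((t ^ α) ^ k * (A ^ k) i j) := by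
  have hs := summable_matrix hα1 hα2 A t ht
  rw [calE, mittagLeffler]
  erw [tsum_apply hs, tsum_apply (Pi.summable.mp hs i)]
  congr 1 with k
  simp [smul_pow, Matrix.smul_apply, smul_eq_mul, mul_assoc]

end

noncomputable def eSup (α : ℝ) {d : ℕ} (A : Matrix (Fin d) (Fin d) ℝ) : ℝ :=
  ∑' k : ℕ, (Real.Gamma (α * k + α))⁻¹ * ((2:ℝ) ^ α * matB A) ^ k

noncomputable def sOne (α : ℝ) {d : ℕ} (A : Matrix (Fin d) (Fin d) ℝ) : ℝ :=
  ∑' k : ℕ, (Real.Gamma (α * k + α))⁻¹ * matB A ^ k * (α * k)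

noncomputable def sTwo (α : ℝ) {d : ℕ} (A : Matrix (Fin d) (Fin d) ℝ) : ℝ :=
  ∑' k : ℕ, (Real.Gamma (α * k + α))⁻¹ * matB A ^ k * (α * k) * ((2:ℝ) ^ α) ^ k

section
variable {α : ℝ} (hα1 : 1 / 2 < α) (hα2 : α < 1) {d : ℕ} (A : Matrix (Fin d) (Fin d) ℝ)
include hα1 hα2

omit hα1 hα2 in
lemma matB_nonneg : (0:ℝ) ≤ matB A := le_trans zero_le_one (one_le_matB A)

lemma summable_eSup :
    Summable (fun k : ℕ => (Real.Gamma (α * k + α))⁻¹ * ((2:ℝ) ^ α * matB A) ^ k) := by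
  have h1 : (0:ℝ) ≤ (2:ℝ) ^ α := Real.rpow_nonneg (by norm_num) α
  exact summable_ml hα1 hα2 _ (mul_nonneg h1 (matB_nonneg A))

lemma summable_sOne :
    Summable (fun k : ℕ => (Real.Gamma (α * k + α))⁻¹ * matB A ^ k * (α * k)) := by
  have hB := matB_nonneg A
  have hB1 := one_le_matB A
  refine Summable.of_nonneg_of_le
    (f := fun k : ℕ => α * ((Real.Gamma (α * k + α))⁻¹ * (2 * matB A) ^ k)) (fun k => ?_) (fun k => ?_) ?_
  · have hG := gamma_ml_pos (α := α) hα1 k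
    have : (0:ℝ) ≤ (k:ℝ) := Nat.cast_nonneg k
    positivity
  · have hG := gamma_ml_pos (α := α) hα1 k
    have hk2 : (k:ℝ) ≤ 2 ^ k := by
      exact_mod_cast Nat.le_of_lt k.lt_two_pow_self
    calc (Real.Gamma (α * k + α))⁻¹ * matB A ^ k * (α * k)
        ≤ (Real.Gamma (α * k + α))⁻¹ * matB A ^ k * (α * 2 ^ k) := by
          apply mul_le_mul_of_nonneg_left (mul_le_mul_of_nonneg_left hk2 (by linarith)) (by positivity)
      _ = α * ((Real.Gamma (α * k + α))⁻¹ * (2 * matB A) ^ k) := by rw [mul_pow]; ring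
  · exact ((summable_ml hα1 hα2 _ (by linarith)).mul_left α)

lemma summable_sTwo :
    Summable (fun k : ℕ =>
      (Real.Gamma (α * k + α))⁻¹ * matB A ^ k * (α * k) * ((2:ℝ) ^ α) ^ k) := by
  have hB := matB_nonneg A
  have hB1 := one_le_matB A
  have h2α : (0:ℝ) ≤ (2:ℝ) ^ α := Real.rpow_nonneg (by norm_num) α
  refine Summable.of_nonneg_of_le
    (f := fun k : ℕ => α * ((Real.Gamma (α * k + α))⁻¹ * (2 * matB A * (2:ℝ) ^ α) ^ k))
    (fun k => ?_) (fun k => ?_) ?_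
  · have hG := gamma_ml_pos (α := α) hα1 k
    have : (0:ℝ) ≤ (k:ℝ) := Nat.cast_nonneg k
    positivity
  · have hG := gamma_ml_pos (α := α) hα1 k
    have hk2 : (k:ℝ) ≤ 2 ^ k := by
      exact_mod_cast Nat.le_of_lt k.lt_two_pow_self
    calc (Real.Gamma (α * k + α))⁻¹ * matB A ^ k * (α * k) * ((2:ℝ) ^ α) ^ k
        ≤ (Real.Gamma (α * k + α))⁻¹ * matB A ^ k * (α * 2 ^ k) * ((2:ℝ) ^ α) ^ k := by
          apply mul_le_mul_of_nonneg_right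
            (mul_le_mul_of_nonneg_left (mul_le_mul_of_nonneg_left hk2 (by linarith)) (by positivity))
            (by positivity)
      _ = α * ((Real.Gamma (α * k + α))⁻¹ * (2 * matB A * (2:ℝ) ^ α) ^ k) := by
          rw [mul_pow, mul_pow]; ring
  · exact ((summable_ml hα1 hα2 _ (by positivity)).mul_left α)

omit hα2 in
lemma eSup_nonneg : 0 ≤ eSup α A :=
  tsum_nonneg fun k => by
    have hG := gamma_ml_pos (α := α) hα1 k
    have h2α : (0:ℝ) ≤ (2:ℝ) ^ α := Real.rpow_nonneg (by norm_num) α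
    have hB := matB_nonneg A
    positivity

omit hα2 in
lemma sOne_nonneg : 0 ≤ sOne α A :=
  tsum_nonneg fun k => by
    have hG := gamma_ml_pos (α := α) hα1 k
    have hB := matB_nonneg A
    have : (0:ℝ) ≤ (k:ℝ) := Nat.cast_nonneg k
    positivity

omit hα2 in
lemma sTwo_nonneg : 0 ≤ sTwo α A :=
  tsum_nonneg fun k => by
    have hG := gamma_ml_pos (α := α) hα1 k
    have hB := matB_nonneg A
    have h2α : (0:ℝ) ≤ (2:ℝ) ^ α := Real.rpow_nonneg (by norm_num) α
    have : (0:ℝ) ≤ (k:ℝ) := Nat.cast_nonneg k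
    positivity

lemma calE_bound (t : ℝ) (ht0 : 0 ≤ t) (ht2 : t ≤ 2) (i j : Fin d) :
    |calE α A t i j| ≤ eSup α A := by
  rw [calE_entry hα1 hα2 A t ht0 i j, ← Real.norm_eq_abs]
  apply tsum_of_norm_bounded (summable_eSup hα1 hα2 A).hasSum
  intro k
  have hG := gamma_ml_pos (α := α) hα1 k
  have htα : 0 ≤ t ^ α := Real.rpow_nonneg ht0 α
  have ht2α : t ^ α ≤ (2:ℝ) ^ α := Real.rpow_le_rpow ht0 ht2 (by linarith)
  rw [Real.norm_eq_abs, abs_mul, abs_of_pos (inv_pos.2 hG), abs_mul, abs_pow,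
    abs_of_nonneg htα]
  simp only [mul_pow]
  apply mul_le_mul_of_nonneg_left _ (le_of_lt (inv_pos.2 hG))
  exact mul_le_mul (pow_le_pow_left₀ htα ht2α k) (entry_pow_le A k i j)
    (abs_nonneg _) (by positivity)

end

lemma rpow_mvt {p K a b x y : ℝ} (ha : 0 < a) (hx : x ∈ Set.Icc a b)
    (hy : y ∈ Set.Icc a b) (hK : ∀ t ∈ Set.Icc a b, |p * t ^ (p - 1)| ≤ K) :
    |x ^ p - y ^ p| ≤ K * |x - y| := by
  have h := Convex.norm_image_sub_le_of_norm_hasDerivWithin_le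
    (f := fun t : ℝ => t ^ p) (f' := fun t : ℝ => p * t ^ (p - 1)) (s := Set.Icc a b)
    (fun t ht => (Real.hasDerivAt_rpow_const
      (Or.inl (ne_of_gt (lt_of_lt_of_le ha ht.1)))).hasDerivWithinAt)
    (fun t ht => by rw [Real.norm_eq_abs]; exact hK t ht)
    (convex_Icc a b) hy hx
  simpa [Real.norm_eq_abs] using h

section
variable {α : ℝ} (hα1 : 1 / 2 < α) (hα2 : α < 1) {d : ℕ} (A : Matrix (Fin d) (Fin d) ℝ)
include hα1 hα2

lemma rpow_pow_diff_le {ε t1 t2 : ℝ} (hε : 0 < ε) (hε1 : ε ≤ 1)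
    (ht1 : t1 ∈ Set.Icc ε 2) (ht2 : t2 ∈ Set.Icc ε 2) (k : ℕ) :
    |(t1 ^ α) ^ k - (t2 ^ α) ^ k| ≤
      α * k * (ε ^ (α - 1) + ((2:ℝ) ^ α) ^ k) * |t1 - t2| := by
  have hα0 : 0 < α := by linarith
  have ht10 : 0 < t1 := lt_of_lt_of_le hε ht1.1
  have ht20 : 0 < t2 := lt_of_lt_of_le hε ht2.1
  rcases Nat.eq_zero_or_pos k with hk | hk
  · subst hk; simp
  -- convert to rpow
  have e1 : (t1 ^ α) ^ k = t1 ^ (α * k) := by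
    rw [Real.rpow_mul ht10.le, Real.rpow_natCast]
  have e2 : (t2 ^ α) ^ k = t2 ^ (α * k) := by
    rw [Real.rpow_mul ht20.le, Real.rpow_natCast]
  rw [e1, e2]
  set p : ℝ := α * k with hp
  have hp0 : 0 < p := by
    have : (1:ℝ) ≤ (k:ℝ) := by exact_mod_cast hk
    positivity
  apply rpow_mvt hε ht1 ht2
  intro t ht
  have ht0 : 0 < t := lt_of_lt_of_le hε ht.1
  have habs : |p * t ^ (p - 1)| = p * t ^ (p - 1) := by
    apply abs_of_nonneg
    positivity
  rw [habs]
  have hend : t ^ (p - 1) ≤ ε ^ (α - 1) + ((2:ℝ) ^ α) ^ k := by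
    have h2k : (2:ℝ) ^ (p - 1) ≤ ((2:ℝ) ^ α) ^ k := by
      have : (2:ℝ) ^ (p - 1) ≤ (2:ℝ) ^ p :=
        Real.rpow_le_rpow_of_exponent_le (by norm_num) (by linarith)
      calc (2:ℝ) ^ (p - 1) ≤ (2:ℝ) ^ p := this
        _ = ((2:ℝ) ^ α) ^ k := by
            rw [hp, Real.rpow_mul (by norm_num), Real.rpow_natCast]
    have hεk : ε ^ (p - 1) ≤ ε ^ (α - 1) := by
      apply Real.rpow_le_rpow_of_exponent_ge hε hε1
      have : α ≤ p := by
        rw [hp]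
        nlinarith [(by exact_mod_cast hk : (1:ℝ) ≤ (k:ℝ))]
      linarith
    rcases le_or_gt (p - 1) 0 with hple | hpgt
    · have : t ^ (p - 1) ≤ ε ^ (p - 1) := Real.rpow_le_rpow_of_nonpos hε ht.1 hple
      have h2 : (0:ℝ) ≤ ((2:ℝ) ^ α) ^ k := by positivity
      linarith
    · have : t ^ (p - 1) ≤ (2:ℝ) ^ (p - 1) :=
        Real.rpow_le_rpow ht0.le ht.2 hpgt.le
      have hε2 : (0:ℝ) ≤ ε ^ (α - 1) := (Real.rpow_pos_of_pos hε _).le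
      linarith
  calc p * t ^ (p - 1) ≤ p * (ε ^ (α - 1) + ((2:ℝ) ^ α) ^ k) :=
        mul_le_mul_of_nonneg_left hend hp0.le
    _ = α * k * (ε ^ (α - 1) + ((2:ℝ) ^ α) ^ k) := by rw [hp]

lemma calE_diff {ε t1 t2 : ℝ} (hε : 0 < ε) (hε1 : ε ≤ 1)
    (ht1 : t1 ∈ Set.Icc ε 2) (ht2 : t2 ∈ Set.Icc ε 2) (i j : Fin d) :
    |calE α A t1 i j - calE α A t2 i j| ≤
      (ε ^ (α - 1) * sOne α A + sTwo α A) * |t1 - t2| := by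
  have ht10 : (0:ℝ) ≤ t1 := (lt_of_lt_of_le hε ht1.1).le
  have ht20 : (0:ℝ) ≤ t2 := (lt_of_lt_of_le hε ht2.1).le
  have hs1 := summable_entry hα1 hα2 A t1 ht10 i j
  have hs2 := summable_entry hα1 hα2 A t2 ht20 i j
  rw [calE_entry hα1 hα2 A t1 ht10 i j, calE_entry hα1 hα2 A t2 ht20 i j,
    ← hs1.tsum_sub hs2, ← Real.norm_eq_abs]
  have hhs : HasSum
      (fun k : ℕ => ((Real.Gamma (α * k + α))⁻¹ * matB A ^ k * (α * k) * ε ^ (α - 1)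
        + (Real.Gamma (α * k + α))⁻¹ * matB A ^ k * (α * k) * ((2:ℝ) ^ α) ^ k) * |t1 - t2|)
      ((ε ^ (α - 1) * sOne α A + sTwo α A) * |t1 - t2|) := by
    have h1 := ((summable_sOne hα1 hα2 A).hasSum.mul_right (ε ^ (α - 1))).add
      (summable_sTwo hα1 hα2 A).hasSum
    have h2 := h1.mul_right |t1 - t2|
    have e3 : (ε ^ (α - 1) * sOne α A + sTwo α A) =
        ((∑' (b : ℕ), (Real.Gamma (α * ↑b + α))⁻¹ * matB A ^ b * (α * ↑b)) * ε ^ (α - 1) +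
          ∑' (b : ℕ), (Real.Gamma (α * ↑b + α))⁻¹ * matB A ^ b * (α * ↑b) * ((2:ℝ) ^ α) ^ b) := by
      rw [sOne, sTwo]; ring
    rw [e3]; exact h2
  apply tsum_of_norm_bounded hhs
  intro k
  have hG := gamma_ml_pos (α := α) hα1 k
  have hB := matB_nonneg A
  rw [Real.norm_eq_abs]
  have e : (Real.Gamma (α * k + α))⁻¹ * ((t1 ^ α) ^ k * (A ^ k) i j)
      - (Real.Gamma (α * k + α))⁻¹ * ((t2 ^ α) ^ k * (A ^ k) i j)
      = (Real.Gamma (α * k + α))⁻¹ * (((t1 ^ α) ^ k - (t2 ^ α) ^ k) * (A ^ k) i j) := by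
    ring
  rw [e, abs_mul, abs_of_pos (inv_pos.2 hG), abs_mul]
  calc (Real.Gamma (α * k + α))⁻¹ * (|(t1 ^ α) ^ k - (t2 ^ α) ^ k| * |(A ^ k) i j|)
      ≤ (Real.Gamma (α * k + α))⁻¹ *
        ((α * k * (ε ^ (α - 1) + ((2:ℝ) ^ α) ^ k) * |t1 - t2|) * matB A ^ k) := by
        apply mul_le_mul_of_nonneg_left _ (inv_pos.2 hG).le
        exact mul_le_mul (rpow_pow_diff_le hα1 hα2 hε hε1 ht1 ht2 k)
          (entry_pow_le A k i j) (abs_nonneg _)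
          (by
            have hεp : (0:ℝ) ≤ ε ^ (α - 1) := (Real.rpow_pos_of_pos hε _).le
            have h2p : (0:ℝ) ≤ ((2:ℝ) ^ α) ^ k := by positivity
            have hα0 : (0:ℝ) < α := by linarith
            have hk0 : (0:ℝ) ≤ (k:ℝ) := Nat.cast_nonneg k
            positivity)
    _ = ((Real.Gamma (α * k + α))⁻¹ * matB A ^ k * (α * k) * ε ^ (α - 1)
        + (Real.Gamma (α * k + α))⁻¹ * matB A ^ k * (α * k) * ((2:ℝ) ^ α) ^ k) * |t1 - t2| := by
        ring

end


section
variable {α : ℝ} (hα1 : 1 / 2 < α) (hα2 : α < 1) {d : ℕ} (A : Matrix (Fin d) (Fin d) ℝ)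
include hα1 hα2

lemma factor_crude {n : ℕ} (hn : 1 ≤ n) {y u1 u2 : ℝ} (hy : 0 < y)
    (h1 : y ≤ u1) (h2 : y ≤ u2) (h1' : u1 ≤ 2 * n) (h2' : u2 ≤ 2 * n) (i j : Fin d) :
    |calK α u1 * calE α A (u1 / n) i j - calK α u2 * calE α A (u2 / n) i j| ≤
      2 * eSup α A * y ^ (α - 1) := by
  have hn0 : (0:ℝ) < n := by exact_mod_cast hn
  have hu1 : 0 < u1 := lt_of_lt_of_le hy h1
  have hu2 : 0 < u2 := lt_of_lt_of_le hy h2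
  rw [calK, calK, if_pos hu1, if_pos hu2]
  have hk1 : u1 ^ (α - 1) ≤ y ^ (α - 1) :=
    Real.rpow_le_rpow_of_nonpos hy h1 (by linarith)
  have hk2 : u2 ^ (α - 1) ≤ y ^ (α - 1) :=
    Real.rpow_le_rpow_of_nonpos hy h2 (by linarith)
  have he1 : |calE α A (u1 / n) i j| ≤ eSup α A :=
    calE_bound hα1 hα2 A _ (by positivity) (by rw [div_le_iff₀ hn0]; linarith) i j
  have he2 : |calE α A (u2 / n) i j| ≤ eSup α A :=
    calE_bound hα1 hα2 A _ (by positivity) (by rw [div_le_iff₀ hn0]; linarith) i j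
  have hE0 := eSup_nonneg hα1 A
  have hyp : 0 < y ^ (α - 1) := Real.rpow_pos_of_pos hy _
  calc |u1 ^ (α - 1) * calE α A (u1 / n) i j - u2 ^ (α - 1) * calE α A (u2 / n) i j|
      ≤ |u1 ^ (α - 1) * calE α A (u1 / n) i j| + |u2 ^ (α - 1) * calE α A (u2 / n) i j| :=
        abs_sub _ _
    _ ≤ y ^ (α - 1) * eSup α A + y ^ (α - 1) * eSup α A := by
        rw [abs_mul, abs_mul, abs_of_pos (Real.rpow_pos_of_pos hu1 _),
          abs_of_pos (Real.rpow_pos_of_pos hu2 _)]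
        have h1n := abs_nonneg (calE α A (u1 / (n:ℝ)) i j)
        have h2n := abs_nonneg (calE α A (u2 / (n:ℝ)) i j)
        gcongr
        repeat' first | exact hk1 | exact he1 | exact hk2 | exact he2
    _ = 2 * eSup α A * y ^ (α - 1) := by ring

lemma factor_fine {n : ℕ} (hn : 1 ≤ n) {y u1 u2 : ℝ} (hy : 0 < y) (hyn : y ≤ n)
    (h1 : y ≤ u1) (h2 : y ≤ u2) (h1' : u1 ≤ 2 * n) (h2' : u2 ≤ 2 * n)
    (hdiff : |u1 - u2| ≤ 1) (i j : Fin d) :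
    |calK α u1 * calE α A (u1 / n) i j - calK α u2 * calE α A (u2 / n) i j| ≤
      ((1 - α) * eSup α A + sOne α A + sTwo α A) * y ^ (α - 2) := by
  have hn0 : (0:ℝ) < n := by exact_mod_cast hn
  have hu1 : 0 < u1 := lt_of_lt_of_le hy h1
  have hu2 : 0 < u2 := lt_of_lt_of_le hy h2
  rw [calK, calK, if_pos hu1, if_pos hu2]
  set a1 := u1 ^ (α - 1)
  set a2 := u2 ^ (α - 1)
  set e1 := calE α A (u1 / n) i j
  set e2 := calE α A (u2 / n) i j
  have hsplit : a1 * e1 - a2 * e2 = (a1 - a2) * e1 + a2 * (e1 - e2) := by ring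
  have hE0 := eSup_nonneg hα1 A
  have hS1 := sOne_nonneg hα1 A
  have hS2 := sTwo_nonneg hα1 A
  -- (i) |a1 - a2| ≤ (1-α) y^(α-2)
  have hi : |a1 - a2| ≤ (1 - α) * y ^ (α - 2) := by
    have hmvt : |a1 - a2| ≤ ((1 - α) * y ^ (α - 2)) * |u1 - u2| := by
      apply rpow_mvt hy (Set.mem_Icc.2 ⟨h1, h1'⟩) (Set.mem_Icc.2 ⟨h2, h2'⟩)
      intro t ht
      have ht0 : 0 < t := lt_of_lt_of_le hy ht.1
      have : |(α - 1) * t ^ (α - 1 - 1)| = (1 - α) * t ^ (α - 2) := by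
        rw [abs_mul, abs_of_neg (by linarith : α - 1 < 0)]
        have : α - 1 - 1 = α - 2 := by ring
        rw [this, abs_of_pos (Real.rpow_pos_of_pos ht0 _)]; ring
      rw [this]
      apply mul_le_mul_of_nonneg_left _ (by linarith)
      exact Real.rpow_le_rpow_of_nonpos hy ht.1 (by linarith)
    calc |a1 - a2| ≤ ((1 - α) * y ^ (α - 2)) * |u1 - u2| := hmvt
      _ ≤ ((1 - α) * y ^ (α - 2)) * 1 := by
          apply mul_le_mul_of_nonneg_left hdiff
          have := Real.rpow_pos_of_pos hy (α - 2)
          nlinarith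
      _ = (1 - α) * y ^ (α - 2) := by ring
  have he1 : |e1| ≤ eSup α A :=
    calE_bound hα1 hα2 A _ (by positivity) (by rw [div_le_iff₀ hn0]; linarith) i j
  -- (ii)
  have hε : (0:ℝ) < y / n := by positivity
  have hε1 : y / n ≤ 1 := by rw [div_le_one hn0]; exact hyn
  have ht1m : u1 / n ∈ Set.Icc (y / n) 2 :=
    ⟨by gcongr, by rw [div_le_iff₀ hn0]; linarith⟩
  have ht2m : u2 / n ∈ Set.Icc (y / n) 2 :=
    ⟨by gcongr, by rw [div_le_iff₀ hn0]; linarith⟩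
  have hii : |e1 - e2| ≤ ((y / n) ^ (α - 1) * sOne α A + sTwo α A) * (1 / n) := by
    have h := calE_diff hα1 hα2 A hε hε1 ht1m ht2m i j
    have hd : |u1 / n - u2 / n| ≤ 1 / n := by
      rw [div_sub_div_same, abs_div, abs_of_pos hn0]
      gcongr
    calc |e1 - e2| ≤ ((y / n) ^ (α - 1) * sOne α A + sTwo α A) * |u1 / n - u2 / n| := h
      _ ≤ ((y / n) ^ (α - 1) * sOne α A + sTwo α A) * (1 / n) := by
          apply mul_le_mul_of_nonneg_left hd
          have := Real.rpow_pos_of_pos hε (α - 1)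
          positivity
  have ha2 : a2 ≤ y ^ (α - 1) := Real.rpow_le_rpow_of_nonpos hy h2 (by linarith)
  have ha2p : 0 < a2 := Real.rpow_pos_of_pos hu2 _
  -- key rpow algebra
  have hT1 : y ^ (α - 1) * ((y / n) ^ (α - 1) * (1 / n)) ≤ y ^ (α - 2) := by
    rw [Real.div_rpow hy.le hn0.le]
    have hyy : y ^ (α - 1) * y ^ (α - 1) = y ^ (α - 2) * y ^ α := by
      rw [← Real.rpow_add hy, ← Real.rpow_add hy]; ring_nf
    have hnn : n ^ (α - 1) * (n:ℝ) = (n:ℝ) ^ α := by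
      rw [← Real.rpow_add_one hn0.ne']; norm_num
    have hyα : y ^ α ≤ (n:ℝ) ^ α := Real.rpow_le_rpow hy.le hyn (by linarith)
    have hnαp : (0:ℝ) < (n:ℝ) ^ α := Real.rpow_pos_of_pos hn0 _
    have hy2p : (0:ℝ) < y ^ (α - 2) := Real.rpow_pos_of_pos hy _
    calc y ^ (α - 1) * (y ^ (α - 1) / (n:ℝ) ^ (α - 1) * (1 / n))
        = (y ^ (α - 1) * y ^ (α - 1)) / ((n:ℝ) ^ (α - 1) * n) := by ring
      _ = y ^ (α - 2) * (y ^ α / (n:ℝ) ^ α) := by rw [hyy, hnn]; ring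
      _ ≤ y ^ (α - 2) * 1 := by
          apply mul_le_mul_of_nonneg_left _ hy2p.le
          rw [div_le_one hnαp]; exact hyα
      _ = y ^ (α - 2) := by ring
  have hT2 : y ^ (α - 1) * (1 / n) ≤ y ^ (α - 2) := by
    have hyy : y ^ (α - 1) = y ^ (α - 2) * y := by
      rw [show α - 1 = α - 2 + 1 by ring, Real.rpow_add_one hy.ne']
    have hy2p : (0:ℝ) < y ^ (α - 2) := Real.rpow_pos_of_pos hy _
    calc y ^ (α - 1) * (1 / n) = y ^ (α - 2) * (y / n) := by rw [hyy]; ring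
      _ ≤ y ^ (α - 2) * 1 := mul_le_mul_of_nonneg_left hε1 hy2p.le
      _ = y ^ (α - 2) := by ring
  have hy1p : (0:ℝ) < y ^ (α - 1) := Real.rpow_pos_of_pos hy _
  have hεp : (0:ℝ) < (y / n) ^ (α - 1) := Real.rpow_pos_of_pos hε _
  calc |a1 * e1 - a2 * e2| = |(a1 - a2) * e1 + a2 * (e1 - e2)| := by rw [hsplit]
    _ ≤ |(a1 - a2) * e1| + |a2 * (e1 - e2)| := abs_add_le _ _
    _ = |a1 - a2| * |e1| + a2 * |e1 - e2| := by
        rw [abs_mul, abs_mul, abs_of_pos ha2p]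
    _ ≤ ((1 - α) * y ^ (α - 2)) * eSup α A
        + y ^ (α - 1) * (((y / n) ^ (α - 1) * sOne α A + sTwo α A) * (1 / n)) := by
        gcongr
        repeat' first
        | exact hi | exact he1 | exact hii | exact abs_nonneg _
        | (have := Real.rpow_pos_of_pos hy (α - 2); nlinarith)
    _ = (1 - α) * eSup α A * y ^ (α - 2)
        + (y ^ (α - 1) * ((y / n) ^ (α - 1) * (1 / n))) * sOne α A
        + (y ^ (α - 1) * (1 / n)) * sTwo α A := by ring
    _ ≤ (1 - α) * eSup α A * y ^ (α - 2)
        + y ^ (α - 2) * sOne α A + y ^ (α - 2) * sTwo α A := by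
        gcongr
    _ = ((1 - α) * eSup α A + sOne α A + sTwo α A) * y ^ (α - 2) := by ring

end


theorem stmt1 (α : ℝ) (hα1 : 1 / 2 < α) (hα2 : α < 1) (d : ℕ) (hd : 1 ≤ d)
    (A : Matrix (Fin d) (Fin d) ℝ) (hA : IsNegDef A) :
    ∃ C : ℝ, 0 < C ∧ ∀ n : ℕ, 1 ≤ n → ∀ v s : ℝ, 0 ≤ v → v < s → s ≤ 1 →
      ∀ i j : Fin d, ∀ y : ℝ, 0 < y → y < (⌊(n : ℝ) * v⌋ : ℝ) →
        |calK α (y + (n : ℝ) * s - (⌊(n : ℝ) * v⌋ : ℝ)) *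
              calE α A ((y + (n : ℝ) * s - (⌊(n : ℝ) * v⌋ : ℝ)) / n) i j
            - calK α ((⌈y⌉ : ℝ) + (⌊(n : ℝ) * s⌋ : ℝ) - (⌊(n : ℝ) * v⌋ : ℝ)) *
              calE α A (((⌈y⌉ : ℝ) + (⌊(n : ℝ) * s⌋ : ℝ) - (⌊(n : ℝ) * v⌋ : ℝ)) / n) i j| *
        |calK α (y + (n : ℝ) * v - (⌊(n : ℝ) * v⌋ : ℝ)) *
              calE α A ((y + (n : ℝ) * v - (⌊(n : ℝ) * v⌋ : ℝ)) / n) i j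
            - calK α ((⌈y⌉ : ℝ)) * calE α A ((⌈y⌉ : ℝ) / n) i j|
        ≤ C * Psi α y := by
  have hE0 := eSup_nonneg hα1 A
  have hS1 := sOne_nonneg hα1 A
  have hS2 := sTwo_nonneg hα1 A
  set C1 : ℝ := 2 * eSup α A with hC1
  set C2 : ℝ := (1 - α) * eSup α A + sOne α A + sTwo α A with hC2
  have hC1n : 0 ≤ C1 := by rw [hC1]; linarith
  have hC2n : 0 ≤ C2 := by
    rw [hC2]
    have h1 : 0 ≤ (1 - α) * eSup α A := mul_nonneg (by linarith) hE0
    linarith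
  refine ⟨C1 * C1 + C2 * C2 + 1, by
    have h1 := mul_self_nonneg C1
    have h2 := mul_self_nonneg C2
    linarith, ?_⟩
  intro n hn v s hv hvs hs1 i j y hy0 hyfv
  have hN0 : (0:ℝ) < n := by exact_mod_cast hn
  have hN1 : (1:ℝ) ≤ n := by exact_mod_cast hn
  set N : ℝ := (n : ℝ) with hNdef
  set fv : ℝ := ((⌊N * v⌋ : ℤ) : ℝ) with hfvdef
  set fs : ℝ := ((⌊N * s⌋ : ℤ) : ℝ) with hfsdef
  set cy : ℝ := ((⌈y⌉ : ℤ) : ℝ) with hcydef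
  have hfv_le : fv ≤ N * v := Int.floor_le _
  have hnv_lt : N * v < fv + 1 := Int.lt_floor_add_one _
  have hfs_le : fs ≤ N * s := Int.floor_le _
  have hns_lt : N * s < fs + 1 := Int.lt_floor_add_one _
  have hvs' : N * v ≤ N * s := mul_le_mul_of_nonneg_left hvs.le hN0.le
  have hfvfs : fv ≤ fs := by
    rw [hfvdef, hfsdef]
    exact_mod_cast Int.floor_le_floor hvs'
  have hcy_ge : y ≤ cy := Int.le_ceil y
  have hcy_lt : cy < y + 1 := Int.ceil_lt_add_one y
  have hcyfv : cy ≤ fv := by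
    have h : (⌈y⌉ : ℤ) ≤ ⌊N * v⌋ := Int.ceil_le.2 (by rw [hfvdef] at hyfv; exact hyfv.le)
    rw [hcydef, hfvdef]
    exact_mod_cast h
  have hNs_N : N * s ≤ N := by nlinarith
  have hfs_N : fs ≤ N := le_trans hfs_le hNs_N
  have hfv_N : fv ≤ N := le_trans hfvfs hfs_N
  have hy_N : y ≤ N := le_trans hyfv.le hfv_N
  -- factor 1 data
  have hu1y : y ≤ y + N * s - fv := by linarith
  have hu2y : y ≤ cy + fs - fv := by linarith
  have hu1_2n : y + N * s - fv ≤ 2 * N := by linarith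
  have hu2_2n : cy + fs - fv ≤ 2 * N := by linarith
  have hd1 : |(y + N * s - fv) - (cy + fs - fv)| ≤ 1 := by
    rw [abs_le]; constructor <;> linarith
  -- factor 2 data
  have hu1y' : y ≤ y + N * v - fv := by linarith
  have hu2y' : y ≤ cy := hcy_ge
  have hu1_2n' : y + N * v - fv ≤ 2 * N := by linarith
  have hu2_2n' : cy ≤ 2 * N := by linarith
  have hd2 : |(y + N * v - fv) - cy| ≤ 1 := by
    rw [abs_le]; constructor <;> linarith
  have hPsi_pos : 0 < Psi α y := by
    rw [Psi]; split <;> exact Real.rpow_pos_of_pos hy0 _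
  rcases le_or_gt y 1 with hy1 | hy1
  · -- crude bounds
    have hb1 := factor_crude hα1 hα2 A hn hy0 hu1y hu2y hu1_2n hu2_2n i j
    have hb2 := factor_crude hα1 hα2 A hn hy0 hu1y' hu2y' hu1_2n' hu2_2n' i j
    have hyp : 0 < y ^ (α - 1) := Real.rpow_pos_of_pos hy0 _
    have hprod := mul_le_mul hb1 hb2 (abs_nonneg _) (mul_nonneg hC1n hyp.le)
    have hee : y ^ (α - 1) * y ^ (α - 1) = y ^ (2 * α - 2) := by
      rw [← Real.rpow_add hy0]; ring_nf
    have hPsi : Psi α y = y ^ (2 * α - 2) := by rw [Psi, if_pos hy1]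
    calc _ ≤ (C1 * y ^ (α - 1)) * (C1 * y ^ (α - 1)) := hprod
      _ = (C1 * C1) * (y ^ (α - 1) * y ^ (α - 1)) := by ring
      _ = (C1 * C1) * Psi α y := by rw [hee, hPsi]
      _ ≤ (C1 * C1 + C2 * C2 + 1) * Psi α y := by
          apply mul_le_mul_of_nonneg_right _ hPsi_pos.le
          have h2 := mul_self_nonneg C2
          have h1 := mul_self_nonneg C1
          linarith
  · -- fine bounds
    have hb1 := factor_fine hα1 hα2 A hn hy0 hy_N hu1y hu2y hu1_2n hu2_2n hd1 i j
    have hb2 := factor_fine hα1 hα2 A hn hy0 hy_N hu1y' hu2y' hu1_2n' hu2_2n' hd2 i j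
    have hyp : 0 < y ^ (α - 2) := Real.rpow_pos_of_pos hy0 _
    have hprod := mul_le_mul hb1 hb2 (abs_nonneg _) (mul_nonneg hC2n hyp.le)
    have hee : y ^ (α - 2) * y ^ (α - 2) = y ^ (2 * α - 4) := by
      rw [← Real.rpow_add hy0]; ring_nf
    have hPsi : Psi α y = y ^ (2 * α - 4) := by rw [Psi, if_neg (not_le.2 hy1)]
    calc _ ≤ (C2 * y ^ (α - 2)) * (C2 * y ^ (α - 2)) := hprod
      _ = (C2 * C2) * (y ^ (α - 2) * y ^ (α - 2)) := by ring
      _ = (C2 * C2) * Psi α y := by rw [hee, hPsi]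
      _ ≤ (C1 * C1 + C2 * C2 + 1) * Psi α y := by
          apply mul_le_mul_of_nonneg_right _ hPsi_pos.le
          have h2 := mul_self_nonneg C2
          have h1 := mul_self_nonneg C1
          linarith
end

section
/- For every α ∈ (1/2, 1), the double integral ∫₀¹ ∫₀^∞ ((⌈y⌉ − x)^{α−1} − ⌈y⌉^{α−1})² dy dx is finite; consequently the constant κ₂²(α) = Γ(α)^{−2} ∫₀¹ ∫₀^∞ ((⌈y⌉ − x)^{α−1} − ⌈y⌉^{α−1})² dy dx is well defined and finite. -/
open MeasureTheory Filter

theorem stmt8 (α : ℝ) (hα1 : 1 / 2 < α) (hα2 : α < 1) :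
    (MeasureTheory.IntegrableOn
      (fun p : ℝ × ℝ =>
        (((⌈p.2⌉ : ℝ) - p.1) ^ (α - 1) - (⌈p.2⌉ : ℝ) ^ (α - 1)) ^ 2)
      (Set.Ioc (0 : ℝ) 1 ×ˢ Set.Ioi (0 : ℝ)) MeasureTheory.volume) ∧
    kappa2sq α = ((Real.Gamma α) ^ 2)⁻¹ *
      ∫ x in Set.Ioc (0 : ℝ) 1, ∫ y in Set.Ioi (0 : ℝ),
        (calK α ((⌈y⌉ : ℝ) - x) - calK α ((⌈y⌉ : ℝ))) ^ 2 := by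
  refine ⟨?_, rfl⟩
  set F : ℝ × ℝ → ℝ := fun p =>
    (((⌈p.2⌉ : ℝ) - p.1) ^ (α - 1) - (⌈p.2⌉ : ℝ) ^ (α - 1)) ^ 2 with hF
  have hceil : Measurable fun y : ℝ => (⌈y⌉ : ℝ) :=
    (measurable_of_countable (fun z : ℤ => (z : ℝ))).comp Int.measurable_ceil
  have hFmeas : Measurable F := by
    rw [hF]
    apply Measurable.pow_const
    apply Measurable.sub
    · have h1 : Measurable fun p : ℝ × ℝ => (⌈p.2⌉ : ℝ) - p.1 :=
        (hceil.comp measurable_snd).sub measurable_fst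
      measurability
    · have h2 : Measurable fun p : ℝ × ℝ => (⌈p.2⌉ : ℝ) := hceil.comp measurable_snd
      measurability
  have hsplit : Set.Ioc (0:ℝ) 1 ×ˢ Set.Ioi (0:ℝ)
      = Set.Ioc (0:ℝ) 1 ×ˢ Set.Ioc (0:ℝ) 1 ∪ Set.Ioc (0:ℝ) 1 ×ˢ Set.Ioi (1:ℝ) := by
    rw [← Set.prod_union, Set.Ioc_union_Ioi_eq_Ioi (by norm_num : (0:ℝ) ≤ 1)]
  rw [hsplit]
  apply MeasureTheory.IntegrableOn.union
  · -- region y ∈ (0,1]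
    have hdom : IntegrableOn (fun p : ℝ × ℝ => ((1 - p.1) ^ (2*α - 2) + 1) * 1)
        (Set.Ioc (0:ℝ) 1 ×ˢ Set.Ioc (0:ℝ) 1) volume := by
      rw [IntegrableOn, Measure.volume_eq_prod, ← Measure.prod_restrict]
      refine Integrable.mul_prod (f := fun x : ℝ => (1 - x) ^ (2*α - 2) + 1)
        (g := fun _ : ℝ => (1:ℝ)) ?_ (integrable_const 1)
      apply Integrable.add
      · have h1 : IntervalIntegrable (fun x : ℝ => x ^ (2*α - 2)) volume 0 1 :=
          intervalIntegral.intervalIntegrable_rpow' (by linarith)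
        have h2 := h1.comp_sub_left 1
        simp only [sub_zero, sub_self] at h2
        exact (intervalIntegrable_iff_integrableOn_Ioc_of_le
          (by norm_num : (0:ℝ) ≤ 1)).mp h2.symm
      · exact integrable_const 1
    refine Integrable.mono' hdom (hFmeas.aestronglyMeasurable.restrict) ?_
    rw [ae_restrict_iff' ((measurableSet_Ioc).prod measurableSet_Ioc)]
    filter_upwards with p hp
    obtain ⟨hx, hy⟩ := hp
    have hcy : (⌈p.2⌉ : ℝ) = 1 := by
      have h : ⌈p.2⌉ = 1 := by
        rw [Int.ceil_eq_iff]
        constructor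
        · simpa using hy.1
        · simpa using hy.2
      rw [h]; norm_num
    have h1x : (0:ℝ) ≤ 1 - p.1 := by linarith [hx.2]
    have ha : (0:ℝ) ≤ (1 - p.1) ^ (α - 1) := Real.rpow_nonneg h1x _
    simp only [hF, hcy, Real.one_rpow, Real.norm_eq_abs, mul_one]
    rw [abs_of_nonneg (sq_nonneg _)]
    have key : ((1 - p.1) ^ (α - 1) - 1) ^ 2 ≤ ((1 - p.1) ^ (α - 1)) ^ 2 + 1 := by
      nlinarith [ha]
    have hsq : ((1 - p.1) ^ (α - 1)) ^ 2 = (1 - p.1) ^ (2*α - 2) := by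
      rw [← Real.rpow_natCast ((1 - p.1) ^ (α - 1)) 2, ← Real.rpow_mul h1x]
      norm_num; ring_nf
    linarith [key, hsq.le, hsq.ge]
  · -- region y ∈ (1,∞)
    have hint : IntegrableOn (fun t : ℝ => (t/2) ^ (2*α - 4)) (Set.Ioi (1:ℝ)) volume := by
      have h1 : IntegrableOn (fun t : ℝ => t ^ (2*α - 4) / 2 ^ (2*α - 4))
          (Set.Ioi (1:ℝ)) volume :=
        (integrableOn_Ioi_rpow_of_lt (by linarith) one_pos).div_const _
      refine h1.congr_fun (fun t ht => ?_) measurableSet_Ioi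
      rw [Real.div_rpow (by simp at ht; linarith) (by norm_num)]
    have hdom : IntegrableOn (fun p : ℝ × ℝ => 1 * (p.2/2) ^ (2*α - 4))
        (Set.Ioc (0:ℝ) 1 ×ˢ Set.Ioi (1:ℝ)) volume := by
      rw [IntegrableOn, Measure.volume_eq_prod, ← Measure.prod_restrict]
      exact Integrable.mul_prod (f := fun _ : ℝ => (1:ℝ))
        (g := fun y : ℝ => (y/2) ^ (2*α - 4)) (integrable_const 1) hint
    refine Integrable.mono' hdom (hFmeas.aestronglyMeasurable.restrict) ?_
    rw [ae_restrict_iff' ((measurableSet_Ioc).prod measurableSet_Ioi)]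
    filter_upwards with p hp
    obtain ⟨hx, hy⟩ := hp
    set c : ℝ := (⌈p.2⌉ : ℝ) with hc
    have hc2 : (2:ℝ) ≤ c := by
      have h : (1:ℤ) < ⌈p.2⌉ := by
        rw [Int.lt_ceil]; exact_mod_cast hy
      have h' : (2:ℤ) ≤ ⌈p.2⌉ := h
      rw [hc]; exact_mod_cast h'
    have hyc : p.2 ≤ c := Int.le_ceil _
    have hy2 : p.2 / 2 ≤ c - 1 := by linarith
    have hy2pos : (0:ℝ) < p.2 / 2 := by
      have : (1:ℝ) < p.2 := hy
      linarith
    have hmvt : |(c - p.1) ^ (α - 1) - c ^ (α - 1)| ≤ (1 - α) * (c - 1) ^ (α - 2) * p.1 := by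
      have hs : Convex ℝ (Set.Ici (c - 1)) := convex_Ici _
      have hderiv : ∀ t ∈ Set.Ici (c - 1),
          HasDerivWithinAt (fun t : ℝ => t ^ (α - 1)) ((α - 1) * t ^ (α - 1 - 1))
            (Set.Ici (c-1)) t := by
        intro t ht
        have htpos : (0:ℝ) < t := by simp only [Set.mem_Ici] at ht; linarith
        exact (Real.hasDerivAt_rpow_const (Or.inl htpos.ne')).hasDerivWithinAt
      have hbound : ∀ t ∈ Set.Ici (c - 1),
          ‖(α - 1) * t ^ (α - 1 - 1)‖ ≤ (1 - α) * (c - 1) ^ (α - 2) := by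
        intro t ht
        simp only [Set.mem_Ici] at ht
        have htpos : (0:ℝ) < t := by linarith
        rw [norm_mul, Real.norm_eq_abs, Real.norm_eq_abs,
          abs_of_nonpos (by linarith), abs_of_nonneg (Real.rpow_nonneg htpos.le _)]
        have hle : t ^ (α - 1 - 1) ≤ (c - 1) ^ (α - 2) := by
          have he : α - 1 - 1 = α - 2 := by ring
          rw [he]
          exact Real.rpow_le_rpow_of_nonpos (by linarith) ht (by linarith)
        nlinarith [hle, Real.rpow_nonneg (show (0:ℝ) ≤ c - 1 by linarith) (α - 2)]
      have hmem1 : c - p.1 ∈ Set.Ici (c - 1) := by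
        simp only [Set.mem_Ici]; linarith [hx.2]
      have hmem2 : c ∈ Set.Ici (c - 1) := by
        simp only [Set.mem_Ici]; linarith
      have h := hs.norm_image_sub_le_of_norm_hasDerivWithin_le hderiv hbound hmem1 hmem2
      rw [Real.norm_eq_abs, Real.norm_eq_abs] at h
      calc |(c - p.1) ^ (α - 1) - c ^ (α - 1)|
          = |c ^ (α-1) - (c - p.1) ^ (α-1)| := abs_sub_comm _ _
        _ ≤ (1 - α) * (c - 1) ^ (α - 2) * |c - (c - p.1)| := h
        _ = (1 - α) * (c - 1) ^ (α - 2) * p.1 := by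
            congr 1
            rw [abs_of_nonneg (by linarith [hx.1])]; ring
    have hstep : |(c - p.1) ^ (α - 1) - c ^ (α - 1)| ≤ (p.2/2) ^ (α - 2) := by
      refine hmvt.trans ?_
      have h1 : (c - 1) ^ (α - 2) ≤ (p.2/2) ^ (α - 2) :=
        Real.rpow_le_rpow_of_nonpos hy2pos hy2 (by linarith)
      have h2 : (0:ℝ) ≤ (c-1) ^ (α - 2) := Real.rpow_nonneg (by linarith) _
      have hle1 : (1 - α) * p.1 ≤ 1 := by nlinarith [hx.1, hx.2]
      calc (1 - α) * (c - 1) ^ (α - 2) * p.1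
          = ((1 - α) * p.1) * (c - 1) ^ (α - 2) := by ring
        _ ≤ 1 * (c - 1) ^ (α - 2) := mul_le_mul_of_nonneg_right hle1 h2
        _ = (c - 1) ^ (α - 2) := one_mul _
        _ ≤ (p.2/2) ^ (α - 2) := h1
    simp only [hF, Real.norm_eq_abs, one_mul]
    rw [abs_of_nonneg (sq_nonneg _), ← hc]
    calc ((c - p.1) ^ (α - 1) - c ^ (α - 1)) ^ 2
        = |(c - p.1) ^ (α - 1) - c ^ (α - 1)| ^ 2 := (sq_abs _).symm
      _ ≤ ((p.2/2) ^ (α - 2)) ^ 2 := by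
          apply pow_le_pow_left₀ (abs_nonneg _) hstep 2
      _ = (p.2/2) ^ (2*α - 4) := by
          rw [← Real.rpow_natCast ((p.2/2) ^ (α - 2)) 2, ← Real.rpow_mul hy2pos.le]
          norm_num; ring_nf
end

section
/- For every α ∈ (1/2, 1), the double integral ∫₀¹ ∫₀^∞ ((y + x)^{α−1} − ⌈y⌉^{α−1})² dy dx is finite; consequently the constant κ₁²(α) = Γ(α)^{−2} ( ∫₀¹ ∫₀^∞ ((y + x)^{α−1} − ⌈y⌉^{α−1})² dy dx + 1/(2α(2α−1)) ) is well defined and finite. -/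
open MeasureTheory Filter

/-- The constant `κ₁²(α)`. -/
noncomputable def kappa1sq (α : ℝ) : ℝ :=
  ((Real.Gamma α) ^ 2)⁻¹ *
    ((∫ x in Set.Ioc (0 : ℝ) 1, ∫ y in Set.Ioi (0 : ℝ),
        ((y + x) ^ (α - 1) - (⌈y⌉ : ℝ) ^ (α - 1)) ^ 2)
      + 1 / (2 * α * (2 * α - 1)))

theorem stmt9 (α : ℝ) (hα1 : 1 / 2 < α) (hα2 : α < 1) :
    (MeasureTheory.IntegrableOn
      (fun p : ℝ × ℝ =>
        ((p.2 + p.1) ^ (α - 1) - (⌈p.2⌉ : ℝ) ^ (α - 1)) ^ 2)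
      (Set.Ioc (0 : ℝ) 1 ×ˢ Set.Ioi (0 : ℝ)) MeasureTheory.volume) ∧
    kappa1sq α = ((Real.Gamma α) ^ 2)⁻¹ *
      ((∫ x in Set.Ioc (0 : ℝ) 1, ∫ y in Set.Ioi (0 : ℝ),
          ((y + x) ^ (α - 1) - (⌈y⌉ : ℝ) ^ (α - 1)) ^ 2)
        + 1 / (2 * α * (2 * α - 1))) := by
  refine ⟨?_, rfl⟩
  open Set in
  set g : ℝ → ℝ := fun y => if y ≤ 1 then y ^ (2*α-2) else y ^ (2*α-4) with hgdef
  -- integrability of g on Ioi 0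
  have hgint : IntegrableOn g (Set.Ioi 0) volume := by
    have h01 : IntegrableOn g (Set.Ioc 0 1) volume := by
      have : IntegrableOn (fun y : ℝ => y ^ (2*α-2)) (Set.Ioc 0 1) volume := by
        apply ((intervalIntegral.integrableOn_Ioo_rpow_iff (by norm_num : (0:ℝ) < 2)).2 (by linarith)).mono_set
        intro y hy; exact ⟨hy.1, lt_of_le_of_lt hy.2 one_lt_two⟩
      exact this.congr_fun (fun y hy => by simp [hgdef, hy.2]) measurableSet_Ioc
    have h1i : IntegrableOn g (Set.Ioi 1) volume := by
      have : IntegrableOn (fun y : ℝ => y ^ (2*α-4)) (Set.Ioi 1) volume :=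
        (integrableOn_Ioi_rpow_iff one_pos).2 (by linarith)
      exact this.congr_fun (fun y hy => by simp [hgdef, not_le.2 (mem_Ioi.1 hy)]) measurableSet_Ioi
    rw [← Set.Ioc_union_Ioi_eq_Ioi (by norm_num : (0:ℝ) ≤ 1)]
    exact h01.union h1i
  rw [IntegrableOn, Measure.volume_eq_prod, ← Measure.prod_restrict]
  have hGint : Integrable (fun z : ℝ × ℝ => (1:ℝ) * g z.2)
      ((volume.restrict (Set.Ioc 0 1)).prod (volume.restrict (Set.Ioi 0))) := by
    exact (integrable_const (1:ℝ)).mul_prod hgint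
  refine hGint.mono' ?_ ?_
  · apply Measurable.aestronglyMeasurable
    have hc : Measurable fun p : ℝ × ℝ => ((⌈p.2⌉:ℝ)) :=
      measurable_from_top.comp (Int.measurable_ceil.comp measurable_snd)
    measurability
  · rw [Measure.prod_restrict, ae_restrict_iff' (measurableSet_Ioc.prod measurableSet_Ioi)]
    refine Eventually.of_forall ?_
    rintro ⟨x, y⟩ ⟨hx, hy⟩
    simp only [Set.mem_Ioc] at hx
    simp only [Set.mem_Ioi] at hy
    have hy0 : (0:ℝ) < y := hy
    rw [Real.norm_eq_abs, abs_of_nonneg (sq_nonneg _), one_mul]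
    simp only [hgdef]
    rcases le_or_gt y 1 with hy1 | hy1
    · rw [if_pos hy1]
      have hceil : (⌈y⌉ : ℤ) = 1 := Int.ceil_eq_iff.2 ⟨by norm_num; linarith, by exact_mod_cast hy1⟩
      rw [hceil]
      have hb : ((1:ℤ):ℝ) ^ (α - 1) = 1 := by norm_num
      rw [hb]
      have ha1 : (0:ℝ) < (y + x) ^ (α-1) := Real.rpow_pos_of_pos (by linarith) _
      have ha2 : (y + x) ^ (α-1) ≤ y ^ (α-1) :=
        Real.rpow_le_rpow_of_nonpos hy0 (by linarith) (by linarith)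
      have hc : (1:ℝ) ≤ y ^ (α-1) :=
        Real.one_le_rpow_of_pos_of_le_one_of_nonpos hy0 hy1 (by linarith)
      have habs : |(y + x) ^ (α-1) - 1| ≤ y ^ (α-1) := by
        rw [abs_sub_le_iff]; constructor <;> nlinarith
      calc ((y + x) ^ (α-1) - 1) ^ 2 = |(y + x) ^ (α-1) - 1| ^ 2 := (sq_abs _).symm
        _ ≤ (y ^ (α-1)) ^ 2 := by
            apply pow_le_pow_left₀ (abs_nonneg _) habs _
        _ = y ^ (2*α-2) := by
            rw [← Real.rpow_natCast (y ^ (α-1)) 2, ← Real.rpow_mul hy0.le]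
            norm_num; ring_nf
    · rw [if_neg (not_le.2 hy1)]
      -- MVT bound on Icc y (y+1)
      have hyge : (1:ℝ) ≤ y := hy1.le
      have key : ∀ a b : ℝ, a ∈ Set.Icc y (y+1) → b ∈ Set.Icc y (y+1) →
          |b ^ (α-1) - a ^ (α-1)| ≤ y ^ (α-2) * |b - a| := by
        intro a b ha hb
        have := (convex_Icc y (y+1)).norm_image_sub_le_of_norm_hasDerivWithin_le
          (f := fun t : ℝ => t ^ (α-1)) (f' := fun t => (α-1) * t ^ (α-1-1))
          (fun t ht => ((Real.hasDerivAt_rpow_const (Or.inl (by intro h; rw [h] at ht; linarith [ht.1]))).hasDerivWithinAt))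
          (fun t ht => by
            have ht0 : (0:ℝ) < t := by linarith [ht.1]
            rw [Real.norm_eq_abs, abs_mul, abs_of_nonneg (Real.rpow_nonneg ht0.le _),
              abs_of_nonpos (by linarith : α - 1 ≤ 0)]
            have h1 : t ^ (α-1-1) ≤ y ^ (α-2) := by
              have : α - 1 - 1 = α - 2 := by ring
              rw [this]
              exact Real.rpow_le_rpow_of_nonpos hy0 ht.1 (by linarith)
            nlinarith [Real.rpow_nonneg ht0.le (α-1-1), Real.rpow_nonneg hy0.le (α-2)])
          ha hb
        simpa [Real.norm_eq_abs] using this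
      have hyx : y + x ∈ Set.Icc y (y+1) := ⟨by linarith [hx.1], by linarith [hx.2]⟩
      have hcy : (⌈y⌉ : ℝ) ∈ Set.Icc y (y+1) := ⟨Int.le_ceil y, (Int.ceil_lt_add_one y).le⟩
      have hdiff : |(y + x) - (⌈y⌉ : ℝ)| ≤ 1 := by
        rw [abs_sub_le_iff]
        constructor <;> [linarith [hcy.1, hyx.2]; linarith [hcy.2, hyx.1]]
      have := key (⌈y⌉ : ℝ) (y + x) hcy hyx
      have hbd : |(y + x) ^ (α-1) - (⌈y⌉ : ℝ) ^ (α-1)| ≤ y ^ (α-2) := by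
        calc |(y + x) ^ (α-1) - (⌈y⌉ : ℝ) ^ (α-1)| ≤ y ^ (α-2) * |(y+x) - (⌈y⌉:ℝ)| := this
          _ ≤ y ^ (α-2) * 1 := by
              apply mul_le_mul_of_nonneg_left hdiff (Real.rpow_nonneg hy0.le _)
          _ = y ^ (α-2) := mul_one _
      calc ((y + x) ^ (α-1) - (⌈y⌉:ℝ) ^ (α-1)) ^ 2
          = |(y + x) ^ (α-1) - (⌈y⌉:ℝ) ^ (α-1)| ^ 2 := (sq_abs _).symm
        _ ≤ (y ^ (α-2)) ^ 2 := pow_le_pow_left₀ (abs_nonneg _) hbd 2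
        _ = y ^ (2*α-4) := by
            rw [← Real.rpow_natCast (y ^ (α-2)) 2, ← Real.rpow_mul hy0.le]
            norm_num; ring_nf
end

section
/- For every t ∈ [0,1] and all indices i₁, j₁, i₂, j₂ ∈ {1,…,d}: lim_{n→∞} ∫₀^t ∫₀¹ 1_{(0, ns−⌊ns⌋)}(v) · |𝒦(v)² ℰ^{i₁}_{j₁}(v/n) ℰ^{i₂}_{j₂}(v/n) − δ_{i₁,j₁} δ_{i₂,j₂} Γ(α)^{−2} 𝒦(v)²| dv ds = 0, where δ denotes the Kronecker delta. -/
open MeasureTheory Filter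

section AuxStmt10

open MeasureTheory Filter

private lemma gamma_step10 {α x : ℝ} (hα1 : 1/2 < α) (hx : 2 ≤ x) :
    x * Real.Gamma x ≤ Real.Gamma (x + 2*α) := by
  have hx0 : x ≠ 0 := by positivity
  rw [← Real.Gamma_add_one hx0]
  exact Real.Gamma_strictMonoOn_Ici.monotoneOn (by simp; linarith) (by simp; linarith)
    (by linarith)

private lemma summable_Q10 {α : ℝ} (hα1 : 1/2 < α) {Q β : ℝ} (hQ : 0 ≤ Q) (hβ : 0 < β) :
    Summable (fun m : ℕ => Q ^ m / Real.Gamma (2*α*m + β)) := by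
  have hα0 : 0 < α := by linarith
  refine summable_of_ratio_norm_eventually_le (by norm_num : (1:ℝ)/2 < 1) ?_
  have htop : Tendsto (fun m : ℕ => 2*α*m + β) atTop atTop := by
    apply Filter.tendsto_atTop_add_const_right
    exact Tendsto.const_mul_atTop (by linarith) tendsto_natCast_atTop_atTop
  filter_upwards [htop.eventually_ge_atTop (max 2 (2*Q))] with m hm
  set x := 2*α*(m:ℝ) + β with hxdef
  have hx2 : 2 ≤ x := le_trans (le_max_left _ _) hm
  have hx2Q : 2*Q ≤ x := le_trans (le_max_right _ _) hm
  have hΓpos : 0 < Real.Gamma x := Real.Gamma_pos_of_pos (by linarith)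
  have hΓ'pos : 0 < Real.Gamma (x + 2*α) := Real.Gamma_pos_of_pos (by linarith)
  have hstep := gamma_step10 hα1 hx2
  have hcast : 2*α*((m:ℝ)+1) + β = x + 2*α := by ring
  rw [Real.norm_eq_abs, Real.norm_eq_abs, abs_of_nonneg (by positivity),
    abs_of_nonneg (by positivity), Nat.cast_add, Nat.cast_one, hcast]
  rw [div_le_iff₀ hΓ'pos]
  have h1 : Q ^ (m+1) = Q * Q ^ m := by ring
  rw [h1]
  calc Q * Q ^ m ≤ (x/2) * Q ^ m := by
        apply mul_le_mul_of_nonneg_right (by linarith) (by positivity)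
    _ = (1/2) * (Q ^ m / Real.Gamma x) * (x * Real.Gamma x) := by
        field_simp
    _ ≤ (1/2) * (Q ^ m / Real.Gamma x) * Real.Gamma (x + 2*α) := by
        apply mul_le_mul_of_nonneg_left hstep (by positivity)

private lemma summable_c10 {α : ℝ} (hα1 : 1/2 < α) {R : ℝ} (hR : 0 ≤ R) :
    Summable (fun k : ℕ => R ^ k / Real.Gamma (α*k + α)) := by
  have hα0 : 0 < α := by linarith
  have he : Summable (fun k : ℕ => R ^ (2*k) / Real.Gamma (α*((2*k : ℕ) : ℝ) + α)) := by
    refine (summable_Q10 hα1 (by positivity : (0:ℝ) ≤ R^2) hα0).congr fun k => ?_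
    push_cast
    rw [pow_mul]
    ring_nf
  have ho : Summable (fun k : ℕ => R ^ (2*k+1) / Real.Gamma (α*((2*k+1 : ℕ) : ℝ) + α)) := by
    refine ((summable_Q10 hα1 (by positivity : (0:ℝ) ≤ R^2)
      (by linarith : (0:ℝ) < 2*α)).mul_left R).congr fun k => ?_
    push_cast
    conv_rhs => rw [pow_succ, pow_mul]
    ring_nf
  exact he.even_add_odd ho

private lemma entry_bound10 {d : ℕ} (A : Matrix (Fin d) (Fin d) ℝ) :
    ∃ C : ℝ, 1 ≤ C ∧ ∀ (k : ℕ) (i j : Fin d), |(A ^ k) i j| ≤ C ^ k := by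
  set S : ℝ := ∑ i, ∑ j, |A i j| with hS
  have hS0 : 0 ≤ S := Finset.sum_nonneg fun i _ => Finset.sum_nonneg fun j _ => abs_nonneg _
  refine ⟨max S 1, le_max_right _ _, fun k => ?_⟩
  induction k with
  | zero =>
    intro i j
    simp only [pow_zero, Matrix.one_apply]
    split <;> simp
  | succ k ih =>
    intro i j
    rw [pow_succ, Matrix.mul_apply]
    calc |∑ l, (A ^ k) i l * A l j| ≤ ∑ l, |(A ^ k) i l * A l j| := Finset.abs_sum_le_sum_abs _ _
      _ ≤ ∑ l, (max S 1) ^ k * |A l j| := by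
          apply Finset.sum_le_sum
          intro l _
          rw [abs_mul]
          exact mul_le_mul_of_nonneg_right (ih i l) (abs_nonneg _)
      _ = (max S 1) ^ k * ∑ l, |A l j| := by rw [Finset.mul_sum]
      _ ≤ (max S 1) ^ k * S := by
          apply mul_le_mul_of_nonneg_left _ (by positivity)
          rw [hS]
          apply Finset.sum_le_sum
          intro l _
          exact Finset.single_le_sum (f := fun j' => |A l j'|)
            (fun j' _ => abs_nonneg _) (Finset.mem_univ j)
      _ ≤ (max S 1) ^ k * (max S 1) :=
          mul_le_mul_of_nonneg_left (le_max_left _ _) (by positivity)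
      _ = (max S 1) ^ (k+1) := by rw [pow_succ]

private lemma my_setIntegral_le10 {f : ℝ → ℝ} {s : Set ℝ} (hs : MeasurableSet s)
    (hμ : MeasureTheory.volume s < ⊤) {C : ℝ} (hC : 0 ≤ C)
    (hb : ∀ x ∈ s, f x ≤ C) (h0 : ∀ x ∈ s, 0 ≤ f x) :
    ∫ x in s, f x ≤ C * (MeasureTheory.volume s).toReal := by
  by_cases hf : Integrable f (volume.restrict s)
  · have h1 : ∫ x in s, f x ≤ ∫ _x in s, C := by
      apply integral_mono_ae hf (integrableOn_const hμ.ne)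
      exact (ae_restrict_iff' hs).2 (Filter.Eventually.of_forall hb)
    simpa [setIntegral_const, smul_eq_mul, mul_comm, Measure.real] using h1
  · rw [integral_undef hf]
    positivity

end AuxStmt10

theorem stmt10 (α : ℝ) (hα1 : 1 / 2 < α) (hα2 : α < 1) (d : ℕ) (hd : 1 ≤ d)
    (A : Matrix (Fin d) (Fin d) ℝ) (hA : IsNegDef A)
    (t : ℝ) (ht0 : 0 ≤ t) (ht1 : t ≤ 1) (i1 j1 i2 j2 : Fin d) :
    Tendsto (fun n : ℕ =>
        ∫ s in Set.Ioc (0 : ℝ) t, ∫ v in Set.Ioc (0 : ℝ) 1,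
          Set.indicator (Set.Ioo (0 : ℝ) ((n : ℝ) * s - (⌊(n : ℝ) * s⌋ : ℝ)))
            (fun v =>
              |(calK α v) ^ 2 * calE α A (v / n) i1 j1 * calE α A (v / n) i2 j2
                - (if i1 = j1 then (1 : ℝ) else 0) * (if i2 = j2 then (1 : ℝ) else 0) *
                    ((Real.Gamma α) ^ 2)⁻¹ * (calK α v) ^ 2|) v)
      atTop (nhds 0) := by
  classical
  have hα0 : 0 < α := by linarith
  obtain ⟨C, hC1, hCb⟩ := entry_bound10 A
  have hC0 : (0:ℝ) ≤ C := by linarith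
  have hsumC : Summable (fun k : ℕ => C ^ k / Real.Gamma (α * k + α)) := summable_c10 hα1 hC0
  set E : Fin d → Fin d → ℝ → ℝ := fun i j u =>
    ∑' k : ℕ, (Real.Gamma (α * k + α))⁻¹ * ((u ^ α) ^ k * (A ^ k) i j) with hEdef
  have hterm : ∀ (i j : Fin d) (k : ℕ), ∀ u ∈ Set.Icc (0:ℝ) 1,
      ‖(Real.Gamma (α * k + α))⁻¹ * ((u ^ α) ^ k * (A ^ k) i j)‖
        ≤ C ^ k / Real.Gamma (α * k + α) := by
    intro i j k u hu
    have hΓ : 0 < Real.Gamma (α * k + α) := Real.Gamma_pos_of_pos (by positivity)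
    have h1 : 0 ≤ u ^ α := Real.rpow_nonneg hu.1 α
    have h2 : u ^ α ≤ 1 := Real.rpow_le_one hu.1 hu.2 hα0.le
    rw [Real.norm_eq_abs, abs_mul, abs_mul,
      abs_of_nonneg (inv_nonneg.2 hΓ.le), abs_of_nonneg (pow_nonneg h1 k), div_eq_inv_mul]
    refine mul_le_mul_of_nonneg_left ?_ (inv_nonneg.2 hΓ.le)
    calc (u ^ α) ^ k * |(A ^ k) i j|
        ≤ 1 * C ^ k :=
          mul_le_mul (pow_le_one₀ h1 h2) (hCb k i j) (abs_nonneg _) zero_le_one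
      _ = C ^ k := one_mul _
  have hEsum : ∀ u ∈ Set.Icc (0:ℝ) 1, ∀ i j : Fin d,
      Summable (fun k : ℕ => (Real.Gamma (α * k + α))⁻¹ * ((u ^ α) ^ k * (A ^ k) i j)) :=
    fun u hu i j => Summable.of_norm_bounded hsumC (fun k => hterm i j k u hu)
  have hEeq : ∀ u ∈ Set.Icc (0:ℝ) 1, ∀ i j : Fin d, calE α A u i j = E i j u := by
    intro u hu i j
    have hf : Summable (fun k : ℕ => (Real.Gamma (α * (k : ℕ) + α))⁻¹ • ((u ^ α) • A) ^ k) := by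
      refine Pi.summable.2 fun i' => ?_
      rw [Pi.summable]; intro j'
      refine ((hEsum u hu i' j')).congr fun k => ?_
      simp only [smul_pow, Matrix.smul_apply, smul_eq_mul]
    calc calE α A u i j
        = (∑' k : ℕ, (Real.Gamma (α * (k:ℕ) + α))⁻¹ • ((u ^ α) • A) ^ k) i j := rfl
      _ = ∑' k : ℕ, ((Real.Gamma (α * (k:ℕ) + α))⁻¹ • ((u ^ α) • A) ^ k) i j := by
          exact (congrFun (tsum_apply (x := i) hf) j).trans (tsum_apply (x := j) (Pi.summable.1 hf i))
      _ = E i j u := by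
          refine tsum_congr fun k => ?_
          simp only [smul_pow, Matrix.smul_apply, smul_eq_mul]
  have hEcont : ∀ i j : Fin d, ContinuousOn (E i j) (Set.Icc (0:ℝ) 1) := by
    intro i j
    refine continuousOn_tsum (fun k => ?_) hsumC (fun k u hu => hterm i j k u hu)
    have hrc : ContinuousOn (fun u : ℝ => u ^ α) (Set.Icc (0:ℝ) 1) := fun x _ =>
      (Real.continuousAt_rpow_const x α (Or.inr hα0.le)).continuousWithinAt
    exact continuousOn_const.mul ((hrc.pow k).mul continuousOn_const)
  have h0mem : (0:ℝ) ∈ Set.Icc (0:ℝ) 1 := ⟨le_refl 0, zero_le_one⟩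
  have hE0 : ∀ i j : Fin d,
      E i j 0 = (Real.Gamma α)⁻¹ * (if i = j then (1:ℝ) else 0) := by
    intro i j
    rw [hEdef]
    simp only
    rw [tsum_eq_single 0 ?_]
    · norm_num [Matrix.one_apply]
    · intro k hk
      rw [Real.zero_rpow hα0.ne', zero_pow hk]
      ring
  set B : ℝ := ∑' k : ℕ, C ^ k / Real.Gamma (α * k + α) with hBdef
  have hB : ∀ (i j : Fin d), ∀ u ∈ Set.Icc (0:ℝ) 1, |E i j u| ≤ B := by
    intro i j u hu
    rw [hEdef]
    simp only
    calc |∑' k : ℕ, (Real.Gamma (α * k + α))⁻¹ * ((u ^ α) ^ k * (A ^ k) i j)|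
        ≤ ∑' k : ℕ, ‖(Real.Gamma (α * k + α))⁻¹ * ((u ^ α) ^ k * (A ^ k) i j)‖ := by
          rw [← Real.norm_eq_abs]
          exact norm_tsum_le_tsum_norm (hsumC.of_nonneg_of_le (fun k => norm_nonneg _)
            (fun k => hterm i j k u hu))
      _ ≤ B := Summable.tsum_le_tsum (fun k => hterm i j k u hu)
          (hsumC.of_nonneg_of_le (fun k => norm_nonneg _) (fun k => hterm i j k u hu)) hsumC
  have hB0 : 0 ≤ B := le_trans (abs_nonneg _) (hB i1 j1 0 h0mem)
  have hdiv : ∀ (n : ℕ), ∀ v ∈ Set.Ioc (0:ℝ) 1, v / (n:ℝ) ∈ Set.Icc (0:ℝ) 1 := by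
    intro n v hv
    constructor
    · exact div_nonneg hv.1.le (Nat.cast_nonneg n)
    · rcases Nat.eq_zero_or_pos n with h | h
      · simp [h]
      · have hn : (1:ℝ) ≤ n := by exact_mod_cast h
        rw [div_le_one (by linarith)]
        exact le_trans hv.2 hn
  have hc20 : (0:ℝ) ≤ ((Real.Gamma α) ^ 2)⁻¹ := by positivity
  set Fn : ℕ → ℝ → ℝ := fun n v =>
    |(calK α v) ^ 2 * calE α A (v / n) i1 j1 * calE α A (v / n) i2 j2
      - (if i1 = j1 then (1:ℝ) else 0) * (if i2 = j2 then (1:ℝ) else 0) *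
          ((Real.Gamma α) ^ 2)⁻¹ * (calK α v) ^ 2| with hFndef
  set bound : ℝ → ℝ := fun v => (calK α v) ^ 2 * (B * B + ((Real.Gamma α) ^ 2)⁻¹)
    with hbounddef
  have hFnonneg : ∀ n v, 0 ≤ Fn n v := by
    intro n v
    rw [hFndef]
    exact abs_nonneg _
  have hFb : ∀ (n : ℕ), ∀ v ∈ Set.Ioc (0:ℝ) 1, Fn n v ≤ bound v := by
    intro n v hv
    have hm := hdiv n v hv
    have he1 : |calE α A (v / n) i1 j1| ≤ B := by rw [hEeq _ hm]; exact hB i1 j1 _ hm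
    have he2 : |calE α A (v / n) i2 j2| ≤ B := by rw [hEeq _ hm]; exact hB i2 j2 _ hm
    have hK0 : (0:ℝ) ≤ (calK α v) ^ 2 := sq_nonneg _
    have hd1 : |(if i1 = j1 then (1:ℝ) else 0)| ≤ 1 := by split <;> norm_num
    have hd2 : |(if i2 = j2 then (1:ℝ) else 0)| ≤ 1 := by split <;> norm_num
    rw [hFndef, hbounddef]
    simp only
    have hX : |(calK α v) ^ 2 * calE α A (v / n) i1 j1 * calE α A (v / n) i2 j2|
        ≤ (calK α v) ^ 2 * (B * B) := by
      rw [abs_mul, abs_mul, abs_of_nonneg hK0]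
      have h12 : |calE α A (v / n) i1 j1| * |calE α A (v / n) i2 j2| ≤ B * B :=
        mul_le_mul he1 he2 (abs_nonneg _) hB0
      calc (calK α v) ^ 2 * |calE α A (v / n) i1 j1| * |calE α A (v / n) i2 j2|
          = (calK α v) ^ 2 * (|calE α A (v / n) i1 j1| * |calE α A (v / n) i2 j2|) := by ring
        _ ≤ (calK α v) ^ 2 * (B * B) := mul_le_mul_of_nonneg_left h12 hK0
    have hY : |(if i1 = j1 then (1:ℝ) else 0) * (if i2 = j2 then (1:ℝ) else 0) *
          ((Real.Gamma α) ^ 2)⁻¹ * (calK α v) ^ 2|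
        ≤ ((Real.Gamma α) ^ 2)⁻¹ * (calK α v) ^ 2 := by
      rw [abs_mul, abs_mul, abs_mul, abs_of_nonneg hc20, abs_of_nonneg hK0]
      have hdd : |(if i1 = j1 then (1:ℝ) else 0)| * |(if i2 = j2 then (1:ℝ) else 0)| ≤ 1 :=
        mul_le_one₀ hd1 (abs_nonneg _) hd2
      calc |(if i1 = j1 then (1:ℝ) else 0)| * |(if i2 = j2 then (1:ℝ) else 0)| *
            ((Real.Gamma α) ^ 2)⁻¹ * (calK α v) ^ 2
          = (|(if i1 = j1 then (1:ℝ) else 0)| * |(if i2 = j2 then (1:ℝ) else 0)|) *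
              (((Real.Gamma α) ^ 2)⁻¹ * (calK α v) ^ 2) := by ring
        _ ≤ 1 * (((Real.Gamma α) ^ 2)⁻¹ * (calK α v) ^ 2) :=
            mul_le_mul_of_nonneg_right hdd (mul_nonneg hc20 hK0)
        _ = ((Real.Gamma α) ^ 2)⁻¹ * (calK α v) ^ 2 := one_mul _
    calc |(calK α v) ^ 2 * calE α A (v / n) i1 j1 * calE α A (v / n) i2 j2
          - (if i1 = j1 then (1:ℝ) else 0) * (if i2 = j2 then (1:ℝ) else 0) *
              ((Real.Gamma α) ^ 2)⁻¹ * (calK α v) ^ 2|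
        ≤ |(calK α v) ^ 2 * calE α A (v / n) i1 j1 * calE α A (v / n) i2 j2|
            + |(if i1 = j1 then (1:ℝ) else 0) * (if i2 = j2 then (1:ℝ) else 0) *
                ((Real.Gamma α) ^ 2)⁻¹ * (calK α v) ^ 2| := by
          rw [sub_eq_add_neg]
          exact (abs_add_le _ _).trans (by rw [abs_neg])
      _ ≤ (calK α v) ^ 2 * (B * B) + ((Real.Gamma α) ^ 2)⁻¹ * (calK α v) ^ 2 :=
          add_le_add hX hY
      _ = (calK α v) ^ 2 * (B * B + ((Real.Gamma α) ^ 2)⁻¹) := by ring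
  have hKsq : IntegrableOn (fun v => (calK α v) ^ 2) (Set.Ioc (0:ℝ) 1) volume := by
    have h1 : IntervalIntegrable (fun x : ℝ => x ^ (2*α - 2)) volume 0 1 :=
      intervalIntegral.intervalIntegrable_rpow' (by linarith)
    rw [intervalIntegrable_iff, Set.uIoc_of_le zero_le_one] at h1
    refine h1.congr_fun ?_ measurableSet_Ioc
    intro v hv
    have hv0 : 0 < v := hv.1
    simp only [calK, if_pos hv0]
    rw [← Real.rpow_natCast (v ^ (α-1)) 2, ← Real.rpow_mul hv0.le]
    congr 1
    push_cast
    ring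
  have hbint : IntegrableOn bound (Set.Ioc (0:ℝ) 1) volume := by
    rw [hbounddef]
    exact hKsq.mul_const _
  have hKm : Measurable (fun v : ℝ => (calK α v) ^ 2) := by
    have hcm : Measurable (calK α) := by
      unfold calK
      exact Measurable.ite (measurableSet_lt measurable_const measurable_id)
        (by measurability) measurable_const
    exact hcm.pow_const 2
  have hEm : ∀ (n : ℕ) (i j : Fin d),
      ContinuousOn (fun v : ℝ => calE α A (v / n) i j) (Set.Ioc (0:ℝ) 1) := by
    intro n i j
    have hcomp : ContinuousOn (fun v : ℝ => E i j (v / n)) (Set.Ioc (0:ℝ) 1) :=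
      (hEcont i j).comp ((continuous_id.div_const _).continuousOn) (fun v hv => hdiv n v hv)
    exact hcomp.congr (fun v hv => hEeq _ (hdiv n v hv) i j)
  have hFm : ∀ n : ℕ, AEStronglyMeasurable (Fn n) (volume.restrict (Set.Ioc (0:ℝ) 1)) := by
    intro n
    have h1 : AEStronglyMeasurable (fun v : ℝ => calE α A (v / n) i1 j1)
        (volume.restrict (Set.Ioc (0:ℝ) 1)) :=
      (hEm n i1 j1).aestronglyMeasurable measurableSet_Ioc
    have h2 : AEStronglyMeasurable (fun v : ℝ => calE α A (v / n) i2 j2)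
        (volume.restrict (Set.Ioc (0:ℝ) 1)) :=
      (hEm n i2 j2).aestronglyMeasurable measurableSet_Ioc
    have hg : AEStronglyMeasurable (fun v : ℝ =>
        (calK α v) ^ 2 * calE α A (v / n) i1 j1 * calE α A (v / n) i2 j2
          - (if i1 = j1 then (1:ℝ) else 0) * (if i2 = j2 then (1:ℝ) else 0) *
              ((Real.Gamma α) ^ 2)⁻¹ * (calK α v) ^ 2)
        (volume.restrict (Set.Ioc (0:ℝ) 1)) :=
      ((hKm.aestronglyMeasurable.mul h1).mul h2).sub
        (hKm.aestronglyMeasurable.const_mul _)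
    rw [hFndef]
    simpa [Real.norm_eq_abs] using hg.norm
  have h_bound : ∀ n : ℕ, ∀ᵐ v ∂(volume.restrict (Set.Ioc (0:ℝ) 1)), ‖Fn n v‖ ≤ bound v := by
    intro n
    refine (ae_restrict_iff' measurableSet_Ioc).2 (Filter.Eventually.of_forall fun v hv => ?_)
    rw [Real.norm_eq_abs, abs_of_nonneg (hFnonneg n v)]
    exact hFb n v hv
  have h_lim : ∀ᵐ v ∂(volume.restrict (Set.Ioc (0:ℝ) 1)),
      Tendsto (fun n : ℕ => Fn n v) atTop (nhds 0) := by
    refine (ae_restrict_iff' measurableSet_Ioc).2 (Filter.Eventually.of_forall fun v hv => ?_)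
    have hdn : Tendsto (fun n : ℕ => v / (n:ℝ)) atTop (nhdsWithin 0 (Set.Icc (0:ℝ) 1)) := by
      rw [tendsto_nhdsWithin_iff]
      exact ⟨tendsto_const_div_atTop_nhds_zero_nat v,
        Filter.Eventually.of_forall fun n => hdiv n v hv⟩
    have hc1 : Tendsto (fun n : ℕ => E i1 j1 (v / n)) atTop (nhds (E i1 j1 0)) :=
      (hEcont i1 j1 0 h0mem).tendsto.comp hdn
    have hc2 : Tendsto (fun n : ℕ => E i2 j2 (v / n)) atTop (nhds (E i2 j2 0)) :=
      (hEcont i2 j2 0 h0mem).tendsto.comp hdn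
    have key : Tendsto (fun n : ℕ =>
        (calK α v) ^ 2 * E i1 j1 (v / n) * E i2 j2 (v / n)
          - (if i1 = j1 then (1:ℝ) else 0) * (if i2 = j2 then (1:ℝ) else 0) *
              ((Real.Gamma α) ^ 2)⁻¹ * (calK α v) ^ 2) atTop
        (nhds ((calK α v) ^ 2 * E i1 j1 0 * E i2 j2 0
          - (if i1 = j1 then (1:ℝ) else 0) * (if i2 = j2 then (1:ℝ) else 0) *
              ((Real.Gamma α) ^ 2)⁻¹ * (calK α v) ^ 2)) :=
      ((tendsto_const_nhds.mul hc1).mul hc2).sub tendsto_const_nhds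
    have hzero : |(calK α v) ^ 2 * E i1 j1 0 * E i2 j2 0
        - (if i1 = j1 then (1:ℝ) else 0) * (if i2 = j2 then (1:ℝ) else 0) *
            ((Real.Gamma α) ^ 2)⁻¹ * (calK α v) ^ 2| = 0 := by
      rw [abs_eq_zero, hE0 i1 j1, hE0 i2 j2]
      have hsq : ((Real.Gamma α) ^ 2 : ℝ)⁻¹ = (Real.Gamma α)⁻¹ * (Real.Gamma α)⁻¹ := by
        rw [sq, mul_inv]
      rw [hsq]
      ring
    have hkey2 := key.abs
    rw [hzero] at hkey2
    refine hkey2.congr fun n => ?_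
    rw [hFndef]
    simp only
    rw [hEeq _ (hdiv n v hv) i1 j1, hEeq _ (hdiv n v hv) i2 j2]
  have hD : Tendsto (fun n : ℕ => ∫ v in Set.Ioc (0:ℝ) 1, Fn n v) atTop (nhds 0) := by
    have hdct := MeasureTheory.tendsto_integral_of_dominated_convergence
      (F := Fn) (f := fun _ => (0:ℝ)) bound hFm hbint h_bound h_lim
    rw [MeasureTheory.integral_zero] at hdct
    exact hdct
  have hFint : ∀ n : ℕ, IntegrableOn (Fn n) (Set.Ioc (0:ℝ) 1) volume := fun n =>
    Integrable.mono' hbint (hFm n) (h_bound n)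
  have hinner_nonneg : ∀ (n : ℕ) (s : ℝ),
      0 ≤ ∫ v in Set.Ioc (0:ℝ) 1,
        Set.indicator (Set.Ioo (0 : ℝ) ((n : ℝ) * s - (⌊(n : ℝ) * s⌋ : ℝ)))
          (fun v =>
            |(calK α v) ^ 2 * calE α A (v / n) i1 j1 * calE α A (v / n) i2 j2
              - (if i1 = j1 then (1 : ℝ) else 0) * (if i2 = j2 then (1 : ℝ) else 0) *
                  ((Real.Gamma α) ^ 2)⁻¹ * (calK α v) ^ 2|) v := fun n s =>
    integral_nonneg fun v => Set.indicator_nonneg (fun x _ => abs_nonneg _) v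
  have hinner_le : ∀ (n : ℕ) (s : ℝ),
      (∫ v in Set.Ioc (0:ℝ) 1,
        Set.indicator (Set.Ioo (0 : ℝ) ((n : ℝ) * s - (⌊(n : ℝ) * s⌋ : ℝ)))
          (fun v =>
            |(calK α v) ^ 2 * calE α A (v / n) i1 j1 * calE α A (v / n) i2 j2
              - (if i1 = j1 then (1 : ℝ) else 0) * (if i2 = j2 then (1 : ℝ) else 0) *
                  ((Real.Gamma α) ^ 2)⁻¹ * (calK α v) ^ 2|) v)
        ≤ ∫ v in Set.Ioc (0:ℝ) 1, Fn n v := by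
    intro n s
    refine integral_mono_of_nonneg
      (Filter.Eventually.of_forall fun v => Set.indicator_nonneg (fun x _ => abs_nonneg _) v)
      (hFint n) (Filter.Eventually.of_forall fun v => ?_)
    have h1 := Set.indicator_le_self'
      (f := fun v : ℝ =>
            |(calK α v) ^ 2 * calE α A (v / n) i1 j1 * calE α A (v / n) i2 j2
              - (if i1 = j1 then (1 : ℝ) else 0) * (if i2 = j2 then (1 : ℝ) else 0) *
                  ((Real.Gamma α) ^ 2)⁻¹ * (calK α v) ^ 2|)
      (s := Set.Ioo (0 : ℝ) ((n : ℝ) * s - (⌊(n : ℝ) * s⌋ : ℝ)))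
      (fun x _ => abs_nonneg _) v
    refine h1.trans ?_
    rw [hFndef]
  have hDn0 : ∀ n : ℕ, 0 ≤ ∫ v in Set.Ioc (0:ℝ) 1, Fn n v := fun n =>
    integral_nonneg fun v => hFnonneg n v
  have hhtend : Tendsto (fun n : ℕ => (∫ v in Set.Ioc (0:ℝ) 1, Fn n v) *
      (MeasureTheory.volume (Set.Ioc (0:ℝ) t)).toReal) atTop (nhds 0) := by
    have := hD.mul_const ((MeasureTheory.volume (Set.Ioc (0:ℝ) t)).toReal)
    rwa [zero_mul] at this
  refine tendsto_of_tendsto_of_tendsto_of_le_of_le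
    (tendsto_const_nhds : Tendsto (fun _ : ℕ => (0:ℝ)) atTop (nhds 0)) hhtend ?_ ?_
  · intro n
    exact setIntegral_nonneg measurableSet_Ioc fun s _ => hinner_nonneg n s
  · intro n
    exact my_setIntegral_le10 measurableSet_Ioc measure_Ioc_lt_top (hDn0 n)
      (fun s _ => hinner_le n s) (fun s _ => hinner_nonneg n s)
end

section
/- For all real numbers 0 < v < s ≤ 1: lim_{n→∞} ∫₀¹ |𝒦(z + ns − nv) − 𝒦(⌊ns⌋ − ⌊nv − z⌋)| · 𝒦(z) dz = 0, with the convention 𝒦(u) = 0 for u ≤ 0 (which is relevant only for finitely many n, since ⌊ns⌋ − ⌊nv − z⌋ ≥ n(s−v) − 1 → ∞). -/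
open MeasureTheory Filter

lemma calK_nonneg (α u : ℝ) : 0 ≤ calK α u := by
  unfold calK; split
  · exact Real.rpow_nonneg (by linarith) _
  · exact le_refl 0

theorem stmt11 (α : ℝ) (hα1 : 1 / 2 < α) (hα2 : α < 1)
    (v s : ℝ) (hv : 0 < v) (hvs : v < s) (hs : s ≤ 1) :
    Tendsto (fun n : ℕ =>
        ∫ z in Set.Ioc (0 : ℝ) 1,
          |calK α (z + (n : ℝ) * s - (n : ℝ) * v)
              - calK α ((⌊(n : ℝ) * s⌋ : ℝ) - (⌊(n : ℝ) * v - z⌋ : ℝ))| * calK α z)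
      atTop (nhds 0) := by
  -- Integrability of calK on (0,1]
  have hα0 : (0:ℝ) < α := by linarith
  have hα1' : α - 1 ≤ 0 := by linarith
  have hK : MeasureTheory.IntegrableOn (calK α) (Set.Ioc (0:ℝ) 1) := by
    have h1 : MeasureTheory.IntegrableOn (fun z : ℝ => z ^ (α - 1)) (Set.Ioc (0:ℝ) 1) := by
      have := intervalIntegral.intervalIntegrable_rpow' (a := (0:ℝ)) (b := 1)
        (r := α - 1) (by linarith)
      rwa [intervalIntegrable_iff_integrableOn_Ioc_of_le (by norm_num)] at this
    refine h1.congr_fun (fun z hz => ?_) measurableSet_Ioc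
    simp [calK, hz.1]
  set C : ℝ := ∫ z in Set.Ioc (0:ℝ) 1, calK α z with hC
  have hsv : 0 < s - v := by linarith
  -- c n → 0
  have hm : Tendsto (fun n : ℕ => (n:ℝ) * (s - v) - 1) atTop atTop := by
    exact (tendsto_natCast_atTop_atTop.atTop_mul_const hsv).atTop_add tendsto_const_nhds
  have hc : Tendsto (fun n : ℕ => ((n:ℝ) * (s - v) - 1) ^ (α - 1) * C) atTop (nhds 0) := by
    have h0 : Tendsto (fun n : ℕ => ((n:ℝ) * (s - v) - 1) ^ (α - 1)) atTop (nhds 0) := by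
      have := (tendsto_rpow_neg_atTop (y := 1 - α) (by linarith)).comp hm
      simpa [Function.comp_def, neg_sub] using this
    simpa using h0.mul_const C
  refine tendsto_of_tendsto_of_tendsto_of_le_of_le' tendsto_const_nhds hc ?_ ?_
  · filter_upwards with n
    exact MeasureTheory.integral_nonneg fun z =>
      mul_nonneg (abs_nonneg _) (calK_nonneg α _)
  · have hev : ∀ᶠ n : ℕ in atTop, (2:ℝ) ≤ (n:ℝ) * (s - v) - 1 := hm.eventually_ge_atTop 2
    filter_upwards [hev] with n hn
    set m : ℝ := (n:ℝ) * (s - v) - 1 with hmdef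
    have hm0 : (0:ℝ) < m := by linarith
    have key : ∀ z ∈ Set.Ioc (0:ℝ) 1,
        |calK α (z + (n : ℝ) * s - (n : ℝ) * v)
            - calK α ((⌊(n : ℝ) * s⌋ : ℝ) - (⌊(n : ℝ) * v - z⌋ : ℝ))| * calK α z
          ≤ m ^ (α - 1) * calK α z := by
      intro z hz
      have hz0 : 0 < z := hz.1
      have ha : m < z + (n : ℝ) * s - (n : ℝ) * v := by
        have : (n:ℝ) * (s - v) = (n:ℝ) * s - (n:ℝ) * v := by ring
        linarith
      have hfs : (n:ℝ) * s - 1 < (⌊(n : ℝ) * s⌋ : ℝ) := by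
        have := Int.sub_one_lt_floor ((n:ℝ) * s); linarith
      have hfv : (⌊(n : ℝ) * v - z⌋ : ℝ) ≤ (n:ℝ) * v - z := Int.floor_le _
      have hb : m < (⌊(n : ℝ) * s⌋ : ℝ) - (⌊(n : ℝ) * v - z⌋ : ℝ) := by
        have : (n:ℝ) * (s - v) = (n:ℝ) * s - (n:ℝ) * v := by ring
        linarith
      have hKa : calK α (z + (n : ℝ) * s - (n : ℝ) * v) ≤ m ^ (α - 1) := by
        rw [calK, if_pos (by linarith)]
        exact Real.rpow_le_rpow_of_nonpos hm0 ha.le hα1'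
      have hKb : calK α ((⌊(n : ℝ) * s⌋ : ℝ) - (⌊(n : ℝ) * v - z⌋ : ℝ)) ≤ m ^ (α - 1) := by
        rw [calK, if_pos (by linarith)]
        exact Real.rpow_le_rpow_of_nonpos hm0 hb.le hα1'
      have hKa0 : 0 ≤ calK α (z + (n : ℝ) * s - (n : ℝ) * v) := by
        exact calK_nonneg α _
      have hKb0 : 0 ≤ calK α ((⌊(n : ℝ) * s⌋ : ℝ) - (⌊(n : ℝ) * v - z⌋ : ℝ)) := by
        exact calK_nonneg α _
      have habs : |calK α (z + (n : ℝ) * s - (n : ℝ) * v)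
          - calK α ((⌊(n : ℝ) * s⌋ : ℝ) - (⌊(n : ℝ) * v - z⌋ : ℝ))| ≤ m ^ (α - 1) := by
        rw [abs_sub_le_iff]; constructor <;> linarith
      exact mul_le_mul_of_nonneg_right habs (calK_nonneg α _)
    calc (∫ z in Set.Ioc (0:ℝ) 1,
          |calK α (z + (n : ℝ) * s - (n : ℝ) * v)
              - calK α ((⌊(n : ℝ) * s⌋ : ℝ) - (⌊(n : ℝ) * v - z⌋ : ℝ))| * calK α z)
        ≤ ∫ z in Set.Ioc (0:ℝ) 1, m ^ (α - 1) * calK α z := by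
          refine MeasureTheory.integral_mono_of_nonneg ?_ (hK.const_mul _) ?_
          · filter_upwards with z
            exact mul_nonneg (abs_nonneg _) (calK_nonneg α _)
          · filter_upwards [MeasureTheory.ae_restrict_mem measurableSet_Ioc] with z hz
            exact key z hz
      _ = m ^ (α - 1) * C := by rw [MeasureTheory.integral_const_mul]
end

section
/- Fix T > 0. There exists a constant C > 0 such that for all u, u₁, u₂ ∈ (0, T]: |ℰ(u)| ≤ C and |ℰ(u₁) − ℰ(u₂)| ≤ C |u₁ − u₂|^α; that is, the matrix-valued function u ↦ ℰ(u) = E_{α,α}(A u^α) is bounded and α-Hölder continuous on (0, T]. -/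
open MeasureTheory Filter

section Aux

open Filter

private lemma gammaStep' (α x : ℝ) (hα : 1/2 < α) (hx : 2 ≤ x) :
    x * Real.Gamma x ≤ Real.Gamma (x + 2*α) := by
  have hx0 : (0:ℝ) < x := by linarith
  have h1 : Real.Gamma (x+1) = x * Real.Gamma x := Real.Gamma_add_one hx0.ne'
  rw [← h1]
  exact Real.Gamma_strictMonoOn_Ici.monotoneOn (by simp; linarith) (by simp; linarith)
    (by linarith)

private lemma gammaSummable' (α : ℝ) (hα : 1/2 < α) (R : ℝ) (hR : 0 ≤ R) :
    Summable (fun k : ℕ => (Real.Gamma (α * k + α))⁻¹ * R ^ k) := by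
  have hα0 : (0:ℝ) < α := by linarith
  set f : ℕ → ℝ := fun k => (Real.Gamma (α * k + α))⁻¹ * R ^ k with hf
  have hgpos : ∀ x : ℝ, 0 < x → 0 < Real.Gamma x := fun x hx => Real.Gamma_pos_of_pos hx
  have hfnn : ∀ k, 0 ≤ f k := by
    intro k
    have : (0:ℝ) < α * k + α := by positivity
    exact mul_nonneg (inv_nonneg.2 (hgpos _ this).le) (pow_nonneg hR k)
  have key : ∀ m : ℕ, 2 + 2*R^2 ≤ α * m + α → f (m + 2) ≤ 1/2 * f m := by
    intro m hm
    set x := α * (m:ℝ) + α with hxdef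
    have hx2 : (2:ℝ) ≤ x := by nlinarith [sq_nonneg R]
    have hx0 : (0:ℝ) < x := by linarith
    have hstep := gammaStep' α x hα hx2
    have hG : 0 < Real.Gamma x := hgpos _ hx0
    have hG2 : 0 < Real.Gamma (x + 2*α) := hgpos _ (by linarith)
    have harg : α * ((m:ℕ) + 2 : ℕ) + α = x + 2*α := by push_cast; ring
    have hfm2 : f (m+2) = (Real.Gamma (x + 2*α))⁻¹ * (R^2 * R^m) := by
      rw [hf]; simp only []; rw [harg, pow_add]; ring
    rw [hfm2, hf]
    have hR2 : R^2 ≤ x/2 := by linarith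
    have h1 : (Real.Gamma (x + 2*α))⁻¹ ≤ (x * Real.Gamma x)⁻¹ :=
      inv_anti₀ (by positivity) hstep
    have h2 : (Real.Gamma (x + 2*α))⁻¹ * (R^2 * R^m)
        ≤ (x * Real.Gamma x)⁻¹ * ((x/2) * R^m) := by
      apply mul_le_mul h1 _ (by positivity) (by positivity)
      exact mul_le_mul_of_nonneg_right hR2 (pow_nonneg hR m)
    calc (Real.Gamma (x + 2*α))⁻¹ * (R^2 * R^m)
        ≤ (x * Real.Gamma x)⁻¹ * ((x/2) * R^m) := h2
      _ = 1/2 * ((Real.Gamma x)⁻¹ * R^m) := by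
          field_simp
  have hevent : ∀ c : ℕ, ∀ᶠ k : ℕ in atTop, 2 + 2*R^2 ≤ α * (2*k+c) + α := by
    intro c
    filter_upwards [eventually_ge_atTop ⌈2 + 2*R^2⌉₊] with k hk
    have h1 : (2 + 2*R^2 : ℝ) ≤ (⌈2 + 2*R^2⌉₊ : ℝ) := Nat.le_ceil _
    have h2 : ((⌈2 + 2*R^2⌉₊ : ℕ) : ℝ) ≤ (k : ℝ) := Nat.cast_le.2 hk
    have h3 : (k:ℝ) ≤ α * (2*k+c) + α := by
      have : (0:ℝ) ≤ (k:ℝ) := Nat.cast_nonneg k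
      have hc : (0:ℝ) ≤ (c:ℝ) := Nat.cast_nonneg c
      nlinarith
    push_cast at h3 ⊢
    linarith
  have hsub : ∀ c : ℕ, Summable fun k => f (2*k + c) := by
    intro c
    apply summable_of_ratio_norm_eventually_le (r := 1/2) (by norm_num)
    filter_upwards [hevent c] with k hk
    rw [Real.norm_eq_abs, Real.norm_eq_abs, abs_of_nonneg (hfnn _), abs_of_nonneg (hfnn _)]
    have h2 : 2*(k+1) + c = (2*k + c) + 2 := by ring
    rw [h2]
    exact key (2*k+c) (by push_cast at hk ⊢; linarith)
  have he := hsub 0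
  have ho := hsub 1
  simp only [Nat.add_zero] at he
  exact (he.hasSum.even_add_odd ho.hasSum).summable

private lemma powEntry' {d : ℕ} (A : Matrix (Fin d) (Fin d) ℝ) :
    ∀ (k : ℕ) (i j : Fin d), |(A ^ k) i j| ≤ (1 + d * ∑ a, ∑ b, |A a b|) ^ k := by
  set S := ∑ a, ∑ b, |A a b| with hS
  have hS0 : 0 ≤ S := Finset.sum_nonneg fun _ _ => Finset.sum_nonneg fun _ _ => abs_nonneg _
  set B := 1 + (d:ℝ) * S with hB
  have hB1 : 1 ≤ B := le_add_of_nonneg_right (by positivity)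
  have hB0 : 0 ≤ B := le_trans zero_le_one hB1
  intro k
  induction k with
  | zero => intro i j; by_cases h : i = j <;> simp [Matrix.one_apply, h]
  | succ k ih =>
    intro i j
    have hmul : (A^(k+1)) i j = ∑ l, (A^k) i l * A l j := by rw [pow_succ, Matrix.mul_apply]
    rw [hmul]
    have hAS : ∀ l : Fin d, |A l j| ≤ S := by
      intro l
      calc |A l j| ≤ ∑ b, |A l b| :=
            Finset.single_le_sum (f := fun b => |A l b|) (fun _ _ => abs_nonneg _)
              (Finset.mem_univ j)
        _ ≤ S := Finset.single_le_sum (f := fun a => ∑ b, |A a b|)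
              (fun _ _ => Finset.sum_nonneg fun _ _ => abs_nonneg _) (Finset.mem_univ l)
    calc |∑ l, (A^k) i l * A l j| ≤ ∑ l, |(A^k) i l * A l j| := Finset.abs_sum_le_sum_abs _ _
      _ ≤ ∑ _l : Fin d, B^k * S := by
          apply Finset.sum_le_sum; intro l _
          rw [abs_mul]
          exact mul_le_mul (ih i l) (hAS l) (abs_nonneg _) (by positivity)
      _ = d * (B^k * S) := by
          rw [Finset.sum_const, Finset.card_univ, Fintype.card_fin, nsmul_eq_mul]
      _ ≤ B^k * B := by
          have hBk : 0 ≤ B^k := pow_nonneg hB0 k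
          have : (d:ℝ) * S ≤ B := by rw [hB]; linarith
          nlinarith
      _ = B^(k+1) := (pow_succ B k).symm

private lemma calE_summable {d : ℕ} (α : ℝ) (hα : 1/2 < α)
    (A : Matrix (Fin d) (Fin d) ℝ) (v : ℝ) (i j : Fin d) :
    Summable (fun k : ℕ => (Real.Gamma (α * k + α))⁻¹ * v ^ k * (A ^ k) i j) := by
  have hα0 : (0:ℝ) < α := by linarith
  set B := 1 + (d:ℝ) * ∑ a, ∑ b, |A a b| with hB
  have hB0 : (0:ℝ) ≤ B := by
    have : (0:ℝ) ≤ (d:ℝ) * ∑ a, ∑ b, |A a b| := by positivity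
    linarith
  apply Summable.of_abs
  refine Summable.of_nonneg_of_le (fun k => abs_nonneg _) ?_
    (gammaSummable' α hα (|v| * B) (by positivity))
  intro k
  have hg : (0:ℝ) < Real.Gamma (α * k + α) := Real.Gamma_pos_of_pos (by positivity)
  rw [abs_mul, abs_mul, abs_of_nonneg (inv_nonneg.2 hg.le), abs_pow, mul_pow, mul_assoc]
  apply mul_le_mul_of_nonneg_left _ (by positivity)
  exact mul_le_mul_of_nonneg_left (powEntry' A k i j) (by positivity)

private lemma calE_apply' {d : ℕ} (α : ℝ) (hα : 1/2 < α)
    (A : Matrix (Fin d) (Fin d) ℝ) (u : ℝ) (i j : Fin d) :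
    calE α A u i j = ∑' k : ℕ, (Real.Gamma (α * k + α))⁻¹ * (u^α) ^ k * (A ^ k) i j := by
  unfold calE mittagLeffler
  have hM : ∀ k : ℕ, (Real.Gamma (α * k + α))⁻¹ • ((u^α) • A)^k
      = ((Real.Gamma (α * k + α))⁻¹ * (u^α)^k) • A^k := by
    intro k; rw [smul_pow, smul_smul]
  rw [tsum_congr hM]
  set F : ℕ → Matrix (Fin d) (Fin d) ℝ :=
    fun k => ((Real.Gamma (α * k + α))⁻¹ * (u^α)^k) • A^k with hF
  have hentry : ∀ (k : ℕ) (i : Fin d) (j : Fin d),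
      F k i j = (Real.Gamma (α * k + α))⁻¹ * (u^α)^k * (A^k) i j := by
    intro k i j; rw [hF]; simp [Matrix.smul_apply, mul_assoc]
  have hsum : Summable F := by
    refine Pi.summable.2 fun a => Pi.summable.2 fun b => ?_
    simp only [hentry]
    exact calE_summable α hα A (u^α) a b
  have h1 : (∑' k, F k) i = ∑' k, F k i := tsum_apply hsum
  have h2 : (∑' k, F k i) j = ∑' k, F k i j := tsum_apply (Pi.summable.1 hsum i)
  rw [h1, h2, tsum_congr (fun k => hentry k i j)]

private lemma frob_le' {d : ℕ} (M : Matrix (Fin d) (Fin d) ℝ) (m : ℝ) (hm : 0 ≤ m)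
    (h : ∀ i j, |M i j| ≤ m) : frobNorm M ≤ d * m := by
  unfold frobNorm
  have hsum : ∑ i, ∑ j, (M i j)^2 ≤ (d*m)^2 := by
    calc ∑ i, ∑ j, (M i j)^2 ≤ ∑ _i : Fin d, ∑ _j : Fin d, m^2 := by
          apply Finset.sum_le_sum; intro i _; apply Finset.sum_le_sum; intro j _
          calc (M i j)^2 = |M i j|^2 := (sq_abs _).symm
            _ ≤ m^2 := pow_le_pow_left₀ (abs_nonneg _) (h i j) 2
      _ = (d*m)^2 := by
          simp [Finset.sum_const, Finset.card_univ, nsmul_eq_mul]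
          ring
  calc Real.sqrt (∑ i, ∑ j, (M i j)^2) ≤ Real.sqrt ((d*m)^2) := Real.sqrt_le_sqrt hsum
    _ = d*m := Real.sqrt_sq (by positivity)

private lemma rpow_add_le' (p x y : ℝ) (hx : 0 ≤ x) (hy : 0 ≤ y) (hp0 : 0 ≤ p) (hp1 : p ≤ 1) :
    (x+y)^p ≤ x^p + y^p := by
  have h := NNReal.rpow_add_le_add_rpow (Real.toNNReal x) (Real.toNNReal y) hp0 hp1
  have h2 := NNReal.coe_le_coe.2 h
  rw [← Real.toNNReal_add hx hy] at h2
  simpa [NNReal.coe_rpow, Real.coe_toNNReal _ hx, Real.coe_toNNReal _ hy,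
    Real.coe_toNNReal _ (add_nonneg hx hy)] using h2

private lemma rpow_sub_le' (α : ℝ) (hα0 : 0 ≤ α) (hα1 : α ≤ 1) :
    ∀ x y : ℝ, 0 ≤ x → 0 ≤ y → |x^α - y^α| ≤ |x - y|^α := by
  have key : ∀ x y : ℝ, 0 ≤ x → 0 ≤ y → y ≤ x → |x^α - y^α| ≤ |x - y|^α := by
    intro x y hx hy hyx
    have h1 : y^α ≤ x^α := Real.rpow_le_rpow hy hyx hα0
    rw [abs_of_nonneg (by linarith), abs_of_nonneg (by linarith)]
    have h2 : x^α ≤ y^α + (x-y)^α := by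
      have := rpow_add_le' α y (x-y) hy (by linarith) hα0 hα1
      rwa [add_sub_cancel] at this
    linarith
  intro x y hx hy
  rcases le_total y x with h | h
  · exact key x y hx hy h
  · rw [abs_sub_comm, abs_sub_comm x y]; exact key y x hy hx h

private lemma pow_diff_le' (x y Q : ℝ) (hx : 0 ≤ x) (hy : 0 ≤ y) (hxQ : x ≤ Q) (hyQ : y ≤ Q)
    (hQ : 1 ≤ Q) (k : ℕ) : |x^k - y^k| ≤ k * Q^k * |x - y| := by
  rw [← geom_sum₂_mul x y k, abs_mul]
  apply mul_le_mul_of_nonneg_right _ (abs_nonneg _)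
  calc |∑ i ∈ Finset.range k, x^i * y^(k-1-i)|
      ≤ ∑ i ∈ Finset.range k, |x^i * y^(k-1-i)| := Finset.abs_sum_le_sum_abs _ _
    _ ≤ ∑ _i ∈ Finset.range k, Q^k := by
        apply Finset.sum_le_sum; intro i hi
        have hik : i < k := Finset.mem_range.1 hi
        rw [abs_mul, abs_pow, abs_pow, abs_of_nonneg hx, abs_of_nonneg hy]
        calc x^i * y^(k-1-i) ≤ Q^i * Q^(k-1-i) := by
              apply mul_le_mul (pow_le_pow_left₀ hx hxQ i) (pow_le_pow_left₀ hy hyQ _)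
                (by positivity) (by positivity)
          _ = Q^(i + (k-1-i)) := (pow_add Q i (k-1-i)).symm
          _ ≤ Q^k := pow_le_pow_right₀ hQ (by omega)
    _ = k * Q^k := by rw [Finset.sum_const, Finset.card_range, nsmul_eq_mul]

end Aux

set_option maxHeartbeats 1000000 in
theorem stmt12 (α : ℝ) (hα1 : 1 / 2 < α) (hα2 : α < 1) (d : ℕ) (hd : 1 ≤ d)
    (A : Matrix (Fin d) (Fin d) ℝ) (hA : IsNegDef A) (T : ℝ) (hT : 0 < T) :
    ∃ C : ℝ, 0 < C ∧
      (∀ u : ℝ, 0 < u → u ≤ T → frobNorm (calE α A u) ≤ C) ∧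
      ∀ u1 u2 : ℝ, 0 < u1 → u1 ≤ T → 0 < u2 → u2 ≤ T →
        frobNorm (calE α A u1 - calE α A u2) ≤ C * |u1 - u2| ^ α := by
  have hα0 : (0:ℝ) < α := by linarith
  set S := ∑ a, ∑ b, |A a b| with hS
  set B := 1 + (d:ℝ) * S with hB
  have hS0 : 0 ≤ S := Finset.sum_nonneg fun _ _ => Finset.sum_nonneg fun _ _ => abs_nonneg _
  have hB1 : (1:ℝ) ≤ B := le_add_of_nonneg_right (by positivity)
  have hB0 : (0:ℝ) ≤ B := le_trans zero_le_one hB1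
  have hPE : ∀ (k : ℕ) (i j : Fin d), |(A^k) i j| ≤ B^k := by
    intro k i j; rw [hB, hS]; exact powEntry' A k i j
  have hTα : (0:ℝ) < T ^ α := Real.rpow_pos_of_pos hT α
  set Q := T ^ α + 1 with hQdef
  have hQ1 : (1:ℝ) ≤ Q := by rw [hQdef]; linarith
  have hQ0 : (0:ℝ) ≤ Q := le_trans zero_le_one hQ1
  set R0 := T^α * B with hR0
  set R1 := 2 * Q * B with hR1
  have hR0nn : 0 ≤ R0 := by rw [hR0]; positivity
  have hR1nn : 0 ≤ R1 := by rw [hR1]; positivity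
  have hc : ∀ k : ℕ, 0 < Real.Gamma (α * k + α) :=
    fun k => Real.Gamma_pos_of_pos (by positivity)
  have hsum0 : Summable (fun k : ℕ => (Real.Gamma (α*k+α))⁻¹ * R0^k) :=
    gammaSummable' α hα1 R0 hR0nn
  have hsum1 : Summable (fun k : ℕ => (Real.Gamma (α*k+α))⁻¹ * R1^k) :=
    gammaSummable' α hα1 R1 hR1nn
  set C0 := ∑' k : ℕ, (Real.Gamma (α * k + α))⁻¹ * R0 ^ k with hC0
  set C1 := ∑' k : ℕ, (Real.Gamma (α * k + α))⁻¹ * R1 ^ k with hC1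
  have hC0nn : 0 ≤ C0 :=
    tsum_nonneg fun k => mul_nonneg (inv_nonneg.2 (hc k).le) (pow_nonneg hR0nn k)
  have hC1nn : 0 ≤ C1 :=
    tsum_nonneg fun k => mul_nonneg (inv_nonneg.2 (hc k).le) (pow_nonneg hR1nn k)
  have hdnn : (0:ℝ) ≤ (d:ℝ) := Nat.cast_nonneg d
  refine ⟨(d:ℝ) * (C0 + C1) + 1, ?_, ?_, ?_⟩
  · nlinarith [mul_nonneg hdnn (add_nonneg hC0nn hC1nn)]
  · -- boundedness
    intro u hu huT
    have huα : 0 < u^α := Real.rpow_pos_of_pos hu α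
    have huT' : u^α ≤ T^α := Real.rpow_le_rpow hu.le huT hα0.le
    have hentry : ∀ i j, |calE α A u i j| ≤ C0 := by
      intro i j
      rw [calE_apply' α hα1 A u i j]
      have hs := calE_summable α hα1 A (u^α) i j
      have habs : Summable (fun k : ℕ =>
          |(Real.Gamma (α*k+α))⁻¹ * (u^α)^k * (A^k) i j|) := hs.abs
      have hterm : ∀ k : ℕ, |(Real.Gamma (α*k+α))⁻¹ * (u^α)^k * (A^k) i j|
          ≤ (Real.Gamma (α*k+α))⁻¹ * R0^k := by
        intro k
        rw [abs_mul, abs_mul, abs_of_nonneg (inv_nonneg.2 (hc k).le), abs_pow,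
          abs_of_nonneg huα.le, mul_assoc]
        apply mul_le_mul_of_nonneg_left _ (inv_nonneg.2 (hc k).le)
        calc (u^α)^k * |(A^k) i j| ≤ (T^α)^k * B^k :=
              mul_le_mul (pow_le_pow_left₀ huα.le huT' k) (hPE k i j) (abs_nonneg _)
                (by positivity)
          _ = R0^k := by rw [hR0, mul_pow]
      calc |∑' k : ℕ, (Real.Gamma (α*k+α))⁻¹ * (u^α)^k * (A^k) i j|
          ≤ ∑' k : ℕ, |(Real.Gamma (α*k+α))⁻¹ * (u^α)^k * (A^k) i j| := by
            simpa only [Real.norm_eq_abs] using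
              norm_tsum_le_tsum_norm (f := fun k : ℕ =>
                (Real.Gamma (α*k+α))⁻¹ * (u^α)^k * (A^k) i j)
                (by simpa only [Real.norm_eq_abs] using habs)
        _ ≤ C0 := habs.tsum_le_tsum hterm hsum0
    calc frobNorm (calE α A u) ≤ d * C0 := frob_le' _ C0 hC0nn hentry
      _ ≤ (d:ℝ) * (C0 + C1) + 1 := by nlinarith [mul_nonneg hdnn hC1nn]
  · -- Hölder continuity
    intro u1 u2 h1 h1T h2 h2T
    have h1α : 0 < u1^α := Real.rpow_pos_of_pos h1 α
    have h2α : 0 < u2^α := Real.rpow_pos_of_pos h2 α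
    have h1T' : u1^α ≤ T^α := Real.rpow_le_rpow h1.le h1T hα0.le
    have h2T' : u2^α ≤ T^α := Real.rpow_le_rpow h2.le h2T hα0.le
    set δ := |u1 - u2| ^ α with hδdef
    have hδ0 : 0 ≤ δ := Real.rpow_nonneg (abs_nonneg _) α
    have hδ : |u1^α - u2^α| ≤ δ := by
      rw [hδdef]; exact rpow_sub_le' α hα0.le hα2.le u1 u2 h1.le h2.le
    have hentry : ∀ i j, |(calE α A u1 - calE α A u2) i j| ≤ C1 * δ := by
      intro i j
      have hs1 := calE_summable α hα1 A (u1^α) i j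
      have hs2 := calE_summable α hα1 A (u2^α) i j
      have hsub : (calE α A u1 - calE α A u2) i j
          = ∑' k : ℕ, ((Real.Gamma (α*k+α))⁻¹ * (u1^α)^k * (A^k) i j
             - (Real.Gamma (α*k+α))⁻¹ * (u2^α)^k * (A^k) i j) := by
        rw [Matrix.sub_apply, calE_apply' α hα1 A u1 i j, calE_apply' α hα1 A u2 i j,
          ← hs1.tsum_sub hs2]
      rw [hsub]
      have hterm : ∀ k : ℕ, |(Real.Gamma (α*k+α))⁻¹ * (u1^α)^k * (A^k) i j
             - (Real.Gamma (α*k+α))⁻¹ * (u2^α)^k * (A^k) i j|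
          ≤ (Real.Gamma (α*k+α))⁻¹ * R1^k * δ := by
        intro k
        have heq : (Real.Gamma (α*k+α))⁻¹ * (u1^α)^k * (A^k) i j
             - (Real.Gamma (α*k+α))⁻¹ * (u2^α)^k * (A^k) i j
            = (Real.Gamma (α*k+α))⁻¹ * (((u1^α)^k - (u2^α)^k) * (A^k) i j) := by ring
        rw [heq, abs_mul, abs_mul, abs_of_nonneg (inv_nonneg.2 (hc k).le)]
        have hd1 : |(u1^α)^k - (u2^α)^k| ≤ (k:ℝ) * Q^k * δ := by
          calc |(u1^α)^k - (u2^α)^k| ≤ (k:ℝ) * Q^k * |u1^α - u2^α| :=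
                pow_diff_le' (u1^α) (u2^α) Q h1α.le h2α.le
                  (by rw [hQdef]; linarith) (by rw [hQdef]; linarith) hQ1 k
            _ ≤ (k:ℝ) * Q^k * δ := by
                apply mul_le_mul_of_nonneg_left hδ (by positivity)
        have hk2 : (k:ℝ) ≤ 2^k := by exact_mod_cast (Nat.lt_two_pow_self (n := k)).le
        have hstep : |(u1^α)^k - (u2^α)^k| * |(A^k) i j| ≤ ((k:ℝ) * Q^k * δ) * B^k :=
          mul_le_mul hd1 (hPE k i j) (abs_nonneg _) (by positivity)
        apply le_trans (mul_le_mul_of_nonneg_left hstep (inv_nonneg.2 (hc k).le))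
        have hfin : (k:ℝ) * Q^k * δ * B^k ≤ R1^k * δ := by
          calc (k:ℝ) * Q^k * δ * B^k ≤ (2:ℝ)^k * Q^k * δ * B^k := by
                apply mul_le_mul_of_nonneg_right _ (pow_nonneg hB0 k)
                apply mul_le_mul_of_nonneg_right _ hδ0
                exact mul_le_mul_of_nonneg_right hk2 (pow_nonneg hQ0 k)
            _ = R1^k * δ := by rw [hR1, mul_pow, mul_pow]; ring
        calc (Real.Gamma (α*k+α))⁻¹ * ((k:ℝ) * Q^k * δ * B^k)
            ≤ (Real.Gamma (α*k+α))⁻¹ * (R1^k * δ) :=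
              mul_le_mul_of_nonneg_left hfin (inv_nonneg.2 (hc k).le)
          _ = (Real.Gamma (α*k+α))⁻¹ * R1^k * δ := by ring
      have habs : Summable (fun k : ℕ => |(Real.Gamma (α*k+α))⁻¹ * (u1^α)^k * (A^k) i j
             - (Real.Gamma (α*k+α))⁻¹ * (u2^α)^k * (A^k) i j|) := (hs1.sub hs2).abs
      have hmaj : Summable (fun k : ℕ => (Real.Gamma (α*k+α))⁻¹ * R1^k * δ) :=
        hsum1.mul_right δ
      calc |∑' k : ℕ, ((Real.Gamma (α*k+α))⁻¹ * (u1^α)^k * (A^k) i j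
             - (Real.Gamma (α*k+α))⁻¹ * (u2^α)^k * (A^k) i j)|
          ≤ ∑' k : ℕ, |(Real.Gamma (α*k+α))⁻¹ * (u1^α)^k * (A^k) i j
             - (Real.Gamma (α*k+α))⁻¹ * (u2^α)^k * (A^k) i j| := by
            simpa only [Real.norm_eq_abs] using
              norm_tsum_le_tsum_norm (f := fun k : ℕ =>
                (Real.Gamma (α*k+α))⁻¹ * (u1^α)^k * (A^k) i j
                 - (Real.Gamma (α*k+α))⁻¹ * (u2^α)^k * (A^k) i j)
                (by simpa only [Real.norm_eq_abs] using habs)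
        _ ≤ ∑' k : ℕ, (Real.Gamma (α*k+α))⁻¹ * R1^k * δ := habs.tsum_le_tsum hterm hmaj
        _ = C1 * δ := by rw [tsum_mul_right]
    calc frobNorm (calE α A u1 - calE α A u2) ≤ d * (C1 * δ) :=
          frob_le' _ (C1 * δ) (mul_nonneg hC1nn hδ0) hentry
      _ = ((d:ℝ) * C1) * δ := by ring
      _ ≤ ((d:ℝ) * (C0 + C1) + 1) * δ := by
          apply mul_le_mul_of_nonneg_right _ hδ0
          nlinarith [mul_nonneg hdnn hC0nn]
end
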